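/- arXiv:0810.0994 — 4 statements merged into one kernel-verified Lean document; each statement's English description precedes it below -/
import Mathlib

section
/- Let k > 0 and let p(t) = C + C₊e^{kt} + C₋e^{-kt} be positive for all t ∈ ℝ. If (C₊, C₋) ≠ (0,0), then the function τ(t) = ∫₀ᵗ dξ/p(ξ) is either bounded above or bounded below (or explodes in finite time), hence is not a surjection from ℝ onto ℝ. Consequently, if τ is a strictly increasing surjection ℝ → ℝ, then C₊ = C₋ = 0 and p is a positive constant. -/
/-!
If `Cp ≠ 0`, then `p(t) e^{-kt} → Cp`, so `1/p = O(e^{-kt})` at `+∞` is integrable on `(0, ∞)`,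
and `τ` is bounded above by `∫₀^∞ dξ/p(ξ)`: it cannot be onto. The reflection `t ↦ -t` swaps
`Cp` and `Cm` and turns `τ` into `t ↦ -τ(-t)`, which reduces the case `Cm ≠ 0` to the first one.
Then `p ≡ C`, and `C > 0` by positivity of `p`.
-/

open Real Set Filter Topology MeasureTheory Asymptotics

noncomputable def expPoly (k C Cp Cm t : ℝ) : ℝ :=
  C + Cp * exp (k * t) + Cm * exp (-k * t)

lemma expPoly_neg (k C Cp Cm t : ℝ) : expPoly k C Cp Cm (-t) = expPoly k C Cm Cp t := by
  simp only [expPoly, mul_neg, neg_mul, neg_neg]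
  ring

@[fun_prop]
lemma continuous_expPoly (k C Cp Cm : ℝ) : Continuous (expPoly k C Cp Cm) := by
  unfold expPoly; fun_prop

lemma expPoly_mul_exp_neg (k C Cp Cm t : ℝ) :
    expPoly k C Cp Cm t * exp (-k * t) = Cp + C * exp (-k * t) + Cm * exp (-k * t) ^ 2 := by
  have : exp (k * t) * exp (-k * t) = 1 := by rw [← exp_add]; simp
  simp only [expPoly]
  linear_combination Cp * this

lemma isBigO_inv_expPoly {k : ℝ} (hk : 0 < k) (C : ℝ) {Cp : ℝ} (hCp : Cp ≠ 0) (Cm : ℝ) :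
    (fun t => 1 / expPoly k C Cp Cm t) =O[atTop] fun t => exp (-k * t) := by
  have hdecay : Tendsto (fun t => exp (-k * t)) atTop (𝓝 0) :=
    tendsto_exp_atBot.comp (tendsto_id.const_mul_atTop_of_neg (neg_neg_iff_pos.2 hk))
  have hlim : Tendsto (fun t => expPoly k C Cp Cm t * exp (-k * t)) atTop (𝓝 Cp) := by
    simp only [expPoly_mul_exp_neg]
    simpa using ((hdecay.const_mul C).const_add Cp).add ((hdecay.pow 2).const_mul Cm)
  refine isBigO_of_div_tendsto_nhds (Eventually.of_forall fun t h => absurd h (exp_pos _).ne')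
    Cp⁻¹ ?_
  convert hlim.inv₀ hCp using 1
  ext t
  simp [div_eq_mul_inv, mul_comm]

lemma integrableOn_Ioi_inv_expPoly {k : ℝ} (hk : 0 < k) (C : ℝ) {Cp : ℝ} (hCp : Cp ≠ 0) (Cm : ℝ)
    (hne : ∀ t, expPoly k C Cp Cm t ≠ 0) (a : ℝ) :
    IntegrableOn (fun t => 1 / expPoly k C Cp Cm t) (Ioi a) :=
  integrable_of_isBigO_exp_neg hk
    ((continuous_const.div (continuous_expPoly k C Cp Cm) hne).continuousOn)
    (isBigO_inv_expPoly hk C hCp Cm)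

lemma integral_le_setIntegral_Ioi {g : ℝ → ℝ} (hg : ∀ x, 0 ≤ g x)
    (hint : IntegrableOn g (Ioi 0)) (t : ℝ) :
    ∫ x in (0 : ℝ)..t, g x ≤ ∫ x in Ioi 0, g x := by
  rcases le_total 0 t with ht | ht
  · rw [intervalIntegral.integral_of_le ht]
    exact setIntegral_mono_set hint (Eventually.of_forall hg) Ioc_subset_Ioi_self.eventuallyLE
  · rw [intervalIntegral.integral_symm]
    have h₁ : 0 ≤ ∫ x in t..0, g x := intervalIntegral.integral_nonneg ht fun x _ => hg x
    have h₂ : 0 ≤ ∫ x in Ioi 0, g x := setIntegral_nonneg measurableSet_Ioi fun x _ => hg x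
    linarith

lemma not_surjective_integral_of_integrableOn_Ioi {g : ℝ → ℝ} (hg : ∀ x, 0 ≤ g x)
    (hint : IntegrableOn g (Ioi 0)) :
    ¬ Function.Surjective fun t => ∫ x in (0 : ℝ)..t, g x := by
  intro hsurj
  obtain ⟨t, ht⟩ := hsurj ((∫ x in Ioi 0, g x) + 1)
  linarith [integral_le_setIntegral_Ioi hg hint t, ht]

lemma not_surjective_integral_inv_expPoly {k : ℝ} (hk : 0 < k) (C : ℝ) {Cp : ℝ} (hCp : Cp ≠ 0)
    (Cm : ℝ) (hpos : ∀ t, 0 < expPoly k C Cp Cm t) :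
    ¬ Function.Surjective fun t => ∫ ξ in (0 : ℝ)..t, 1 / expPoly k C Cp Cm ξ :=
  not_surjective_integral_of_integrableOn_Ioi (fun x => (one_div_pos.2 (hpos x)).le)
    (integrableOn_Ioi_inv_expPoly hk C hCp Cm (fun t => (hpos t).ne') 0)

lemma integral_inv_expPoly_swap (k C Cp Cm t : ℝ) :
    ∫ ξ in (0 : ℝ)..t, 1 / expPoly k C Cm Cp ξ =
      -∫ ξ in (0 : ℝ)..-t, 1 / expPoly k C Cp Cm ξ := by
  simp only [← expPoly_neg k C Cp Cm]
  rw [intervalIntegral.integral_comp_neg (fun ξ => 1 / expPoly k C Cp Cm ξ), neg_zero,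
    intervalIntegral.integral_symm]

theorem stmt_7_general (k C Cp Cm : ℝ) (hk : 0 < k) (p : ℝ → ℝ)
    (hp : ∀ t, p t = C + Cp * Real.exp (k * t) + Cm * Real.exp (-k * t))
    (hpos : ∀ t, 0 < p t)
    (τ : ℝ → ℝ) (hτ : ∀ t, τ t = ∫ ξ in (0:ℝ)..t, 1 / p ξ)
    (hsurj : Function.Surjective τ) :
    Cp = 0 ∧ Cm = 0 ∧ 0 < C := by
  obtain rfl : p = expPoly k C Cp Cm := funext hp
  obtain rfl : τ = fun t => ∫ ξ in (0:ℝ)..t, 1 / expPoly k C Cp Cm ξ := funext hτ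
  have hCp : Cp = 0 := by
    by_contra hCp
    exact not_surjective_integral_inv_expPoly hk C hCp Cm hpos hsurj
  have hCm : Cm = 0 := by
    by_contra hCm
    refine not_surjective_integral_inv_expPoly hk C hCm Cp (fun t => ?_) ?_
    · simpa only [expPoly_neg] using hpos (-t)
    · rw [funext (integral_inv_expPoly_swap k C Cp Cm)]
      exact (neg_surjective.comp hsurj).comp neg_surjective
  refine ⟨hCp, hCm, ?_⟩
  simpa [expPoly, hCp, hCm] using hpos 0

/-- If `p(t) = C + C₊e^{kt} + C₋e^{-kt}` (with `k > 0`) is positive on ℝ and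
`τ(t) = ∫₀ᵗ dξ/p(ξ)` is a strictly increasing surjection of ℝ onto ℝ, then
`C₊ = C₋ = 0` and `p` is the positive constant `C`. -/
theorem stmt_7 (k C Cp Cm : ℝ) (hk : 0 < k) (p : ℝ → ℝ)
    (hp : ∀ t, p t = C + Cp * Real.exp (k * t) + Cm * Real.exp (-k * t))
    (hpos : ∀ t, 0 < p t)
    (τ : ℝ → ℝ) (hτ : ∀ t, τ t = ∫ ξ in (0:ℝ)..t, 1 / p ξ)
    (hmono : StrictMono τ) (hsurj : Function.Surjective τ) :
    Cp = 0 ∧ Cm = 0 ∧ 0 < C :=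
  stmt_7_general k C Cp Cm hk p hp hpos τ hτ hsurj
end

section
/- Let (M^n, g), n ≥ 3, be a connected pseudo-Riemannian manifold and let a, A be solutions of the Sinjukov equation a_{ij,k} = λ_i g_{jk} + λ_j g_{ik}, with A not of the form const·g. If a_{ij} = c¹(x) g_{ij} + c²(x) A_{ij} for smooth functions c¹, c² on M, then c¹ and c² are constants. -/
open scoped BigOperators
noncomputable section

/-- Partial derivative of a scalar function on ℝⁿ in direction `i`. -/
def pd {n : ℕ} (i : Fin n) (f : (Fin n → ℝ) → ℝ) (x : Fin n → ℝ) : ℝ :=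
  fderiv ℝ f x (Pi.single i 1)

/-- Christoffel symbols `Γ^k_{ij}` of the Levi-Civita connection of the metric `g`
(`ginv` denotes the inverse metric). -/
def christoffel {n : ℕ} (g ginv : (Fin n → ℝ) → Fin n → Fin n → ℝ)
    (k i j : Fin n) (x : Fin n → ℝ) : ℝ :=
  (1/2) * ∑ l, ginv x k l *
    (pd i (fun y => g y l j) x + pd j (fun y => g y l i) x - pd l (fun y => g y i j) x)

/-- Covariant derivative `ω_{i,j}` of a covector field `ω`. -/
def covD1 {n : ℕ} (g ginv : (Fin n → ℝ) → Fin n → Fin n → ℝ)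
    (ω : (Fin n → ℝ) → Fin n → ℝ) (i j : Fin n) (x : Fin n → ℝ) : ℝ :=
  pd j (fun y => ω y i) x - ∑ p, christoffel g ginv p i j x * ω x p

/-- Covariant derivative `a_{ij,k}` of a symmetric (0,2)-tensor field `a`. -/
def covD2 {n : ℕ} (g ginv : (Fin n → ℝ) → Fin n → Fin n → ℝ)
    (a : (Fin n → ℝ) → Fin n → Fin n → ℝ) (i j k : Fin n) (x : Fin n → ℝ) : ℝ :=
  pd k (fun y => a y i j) x - (∑ p, christoffel g ginv p i k x * a x p j)
    - ∑ p, christoffel g ginv p j k x * a x i p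

/-- Hessian `f_{,ij}` of a function. -/
def hess {n : ℕ} (g ginv : (Fin n → ℝ) → Fin n → Fin n → ℝ)
    (f : (Fin n → ℝ) → ℝ) (i j : Fin n) (x : Fin n → ℝ) : ℝ :=
  covD1 g ginv (fun y p => pd p f y) i j x

/-- Third covariant derivative `f_{,ijk}` of a function. -/
def thirdD {n : ℕ} (g ginv : (Fin n → ℝ) → Fin n → Fin n → ℝ)
    (f : (Fin n → ℝ) → ℝ) (i j k : Fin n) (x : Fin n → ℝ) : ℝ :=
  covD2 g ginv (fun y p q => hess g ginv f p q y) i j k x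

namespace Stmt13Aux

variable {n : ℕ}

lemma diffAt {f : (Fin n → ℝ) → ℝ} (hf : ContDiff ℝ (⊤ : ℕ∞) f) (x : Fin n → ℝ) :
    DifferentiableAt ℝ f x := (hf.differentiable (by simp)).differentiableAt

lemma contDiff_pd {f : (Fin n → ℝ) → ℝ} (hf : ContDiff ℝ (⊤ : ℕ∞) f) (i : Fin n) :
    Continuous fun x => pd i f x := by
  have h1 : ContDiff ℝ (⊤ : ℕ∞) (fderiv ℝ f) := hf.fderiv_right (by simp)
  exact (h1.clm_apply contDiff_const).continuous

lemma pd_add {f g : (Fin n → ℝ) → ℝ} {x : Fin n → ℝ} (hf : DifferentiableAt ℝ f x)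
    (hg : DifferentiableAt ℝ g x) (i : Fin n) :
    pd i (fun y => f y + g y) x = pd i f x + pd i g x := by
  simp [pd, fderiv_fun_add hf hg]

lemma pd_mul {f g : (Fin n → ℝ) → ℝ} {x : Fin n → ℝ} (hf : DifferentiableAt ℝ f x)
    (hg : DifferentiableAt ℝ g x) (i : Fin n) :
    pd i (fun y => f y * g y) x = f x * pd i g x + g x * pd i f x := by
  simp [pd, fderiv_fun_mul hf hg]

lemma pd_const {x : Fin n → ℝ} (c : ℝ) (i : Fin n) : pd i (fun _ => c) x = 0 := by
  simp [pd]

lemma fderiv_eq_zero_of_pd {f : (Fin n → ℝ) → ℝ} {x : Fin n → ℝ}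
    (h : ∀ i, pd i f x = 0) : fderiv ℝ f x = 0 := by
  ext v
  have hv : v = ∑ i, v i • (Pi.single i (1:ℝ) : Fin n → ℝ) := by
    funext j
    rw [Finset.sum_apply]
    simp [Pi.single_apply]
  conv_lhs => rw [hv]
  rw [map_sum]
  simp only [map_smul]
  have h2 : ∀ i, fderiv ℝ f x (Pi.single i (1:ℝ)) = 0 := fun i => h i
  simp [h2]

lemma flip_inv {G Gi : Fin n → Fin n → ℝ}
    (hGinv : ∀ i j, (∑ k, G i k * Gi k j) = if i = j then (1:ℝ) else 0) :
    ∀ i j, (∑ k, Gi i k * G k j) = if i = j then (1:ℝ) else 0 := by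
  have hMN : (Matrix.of G) * (Matrix.of Gi) = 1 := by
    ext i j
    simp only [Matrix.mul_apply, Matrix.of_apply, Matrix.one_apply]
    exact hGinv i j
  have hNM := mul_eq_one_comm.mp hMN
  intro i j
  have h2 := congrFun (congrFun hNM i) j
  simpa only [Matrix.mul_apply, Matrix.of_apply, Matrix.one_apply] using h2

lemma kill {G Gi : Fin n → Fin n → ℝ}
    (hGinv : ∀ i j, (∑ k, G i k * Gi k j) = if i = j then (1:ℝ) else 0)
    {z : Fin n → ℝ} (hz : ∀ i, (∑ j, G i j * z j) = 0) : ∀ j, z j = 0 := by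
  intro l
  have h1 : z l = ∑ j, (if l = j then (1:ℝ) else 0) * z j := by
    simp [ite_mul]
  rw [h1]
  have h2 : ∀ j, (if l = j then (1:ℝ) else 0) = ∑ k, Gi l k * G k j :=
    fun j => (flip_inv hGinv l j).symm
  calc ∑ j, (if l = j then (1:ℝ) else 0) * z j
      = ∑ j, (∑ k, Gi l k * G k j) * z j := by
        exact Finset.sum_congr rfl fun j _ => by rw [h2 j]
    _ = ∑ j, ∑ k, Gi l k * (G k j * z j) := by
        refine Finset.sum_congr rfl fun j _ => ?_
        rw [Finset.sum_mul]
        exact Finset.sum_congr rfl fun k _ => by ring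
    _ = ∑ k, Gi l k * (∑ j, G k j * z j) := by
        rw [Finset.sum_comm]
        exact Finset.sum_congr rfl fun k _ => by rw [Finset.mul_sum]
    _ = 0 := by simp [hz]

lemma exists_perp (hn : 3 ≤ n) (p q : Fin n → ℝ) :
    ∃ z : Fin n → ℝ, z ≠ 0 ∧ (∑ i, p i * z i) = 0 ∧ (∑ i, q i * z i) = 0 := by
  set M : Matrix (Fin 2) (Fin n) ℝ := Matrix.of ![p, q] with hM
  have hni : ¬ Function.Injective M.mulVecLin := by
    intro hinj
    have h1 := LinearMap.finrank_le_finrank_of_injective hinj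
    simp only [Module.finrank_pi, Fintype.card_fin] at h1
    omega
  rw [Function.not_injective_iff] at hni
  obtain ⟨a, b, hab, hne⟩ := hni
  have hz : M.mulVecLin (a - b) = 0 := by rw [map_sub, hab, sub_self]
  have h0 : (∑ i, p i * (a i - b i)) = 0 := by
    have h' := congrFun hz 0
    simp only [Matrix.mulVecLin_apply, Matrix.mulVec, dotProduct, hM, Matrix.of_apply,
      Matrix.cons_val_zero, Pi.zero_apply, Pi.sub_apply] at h'
    exact h'
  have h1 : (∑ i, q i * (a i - b i)) = 0 := by
    have h' := congrFun hz 1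
    simp only [Matrix.mulVecLin_apply, Matrix.mulVec, dotProduct, hM, Matrix.of_apply,
      Matrix.cons_val_one, Matrix.head_cons, Pi.zero_apply, Pi.sub_apply] at h'
    exact h'
  exact ⟨a - b, sub_ne_zero.mpr hne, h0, h1⟩

lemma rank2 (hn : 3 ≤ n) {G Gi : Fin n → Fin n → ℝ}
    (hGinv : ∀ i j, (∑ k, G i k * Gi k j) = if i = j then (1:ℝ) else 0)
    {c : ℝ} {p q : Fin n → ℝ} (h : ∀ i j, c * G i j = p i * q j + p j * q i) : c = 0 := by
  by_contra hc
  obtain ⟨z, hz0, hpz, hqz⟩ := exists_perp hn p q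
  have hGz : ∀ i, (∑ j, G i j * z j) = 0 := by
    intro i
    have hmain : c * ∑ j, G i j * z j = 0 := by
      rw [Finset.mul_sum]
      calc ∑ j, c * (G i j * z j)
          = ∑ j, (p i * (q j * z j) + q i * (p j * z j)) := by
            refine Finset.sum_congr rfl fun j _ => ?_
            rw [← mul_assoc, h i j]; ring
        _ = p i * (∑ j, q j * z j) + q i * (∑ j, p j * z j) := by
            rw [Finset.sum_add_distrib, Finset.mul_sum, Finset.mul_sum]
        _ = 0 := by rw [hpz, hqz]; ring
    exact (mul_eq_zero.mp hmain).resolve_left hc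
  exact hz0 (funext (kill hGinv hGz))

lemma sympair {p q : Fin n → ℝ} (h : ∀ i j, p i * q j + p j * q i = 0) :
    (∀ i, p i = 0) ∨ (∀ j, q j = 0) := by
  by_cases hp : ∀ i, p i = 0
  · exact Or.inl hp
  · push_neg at hp
    obtain ⟨i₀, hi₀⟩ := hp
    right
    intro j
    have hq0 : q i₀ = 0 := by
      have h' := h i₀ i₀
      rcases mul_eq_zero.mp (by linarith : p i₀ * q i₀ = 0) with h'' | h''
      · exact absurd h'' hi₀
      · exact h''
    have h' := h i₀ j
    rw [hq0] at h'
    rcases mul_eq_zero.mp (by linarith : p i₀ * q j = 0) with h'' | h''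
    · exact absurd h'' hi₀
    · exact h''

/-- Contraction of Christoffel symbols with the metric. -/
lemma christoffel_contract {g ginv : (Fin n → ℝ) → Fin n → Fin n → ℝ}
    (hgsym : ∀ x i j, g x i j = g x j i)
    (hinv : ∀ x i j, (∑ k, g x i k * ginv x k j) = if i = j then (1:ℝ) else 0)
    (x : Fin n → ℝ) (i k j : Fin n) :
    (∑ p, christoffel g ginv p i k x * g x p j)
      = (1/2) * (pd i (fun y => g y j k) x + pd k (fun y => g y j i) x
          - pd j (fun y => g y i k) x) := by
  unfold christoffel
  set T : Fin n → ℝ := fun l =>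
    pd i (fun y => g y l k) x + pd k (fun y => g y l i) x - pd l (fun y => g y i k) x with hT
  calc ∑ p, ((1/2) * ∑ l, ginv x p l * T l) * g x p j
      = ∑ p, ∑ l, (1/2) * T l * (g x j p * ginv x p l) := by
        refine Finset.sum_congr rfl fun p _ => ?_
        rw [Finset.mul_sum, Finset.sum_mul]
        refine Finset.sum_congr rfl fun l _ => ?_
        rw [hgsym x p j]; ring
    _ = ∑ l, (1/2) * T l * (∑ p, g x j p * ginv x p l) := by
        rw [Finset.sum_comm]
        exact Finset.sum_congr rfl fun l _ => by rw [Finset.mul_sum]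
    _ = ∑ l, (1/2) * T l * (if j = l then (1:ℝ) else 0) := by
        exact Finset.sum_congr rfl fun l _ => by rw [hinv x j l]
    _ = (1/2) * T j := by
        simp [mul_ite]

/-- The metric is parallel: `covD2 g = 0`. -/
lemma covD2_g_zero {g ginv : (Fin n → ℝ) → Fin n → Fin n → ℝ}
    (hgsym : ∀ x i j, g x i j = g x j i)
    (hinv : ∀ x i j, (∑ k, g x i k * ginv x k j) = if i = j then (1:ℝ) else 0)
    (x : Fin n → ℝ) (i j k : Fin n) :
    covD2 g ginv g i j k x = 0 := by
  unfold covD2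
  rw [christoffel_contract hgsym hinv x i k j]
  have h2 : (∑ p, christoffel g ginv p j k x * g x i p)
      = ∑ p, christoffel g ginv p j k x * g x p i :=
    Finset.sum_congr rfl fun p _ => by rw [hgsym x i p]
  rw [h2, christoffel_contract hgsym hinv x j k i]
  have e1 : (fun y => g y j i) = (fun y => g y i j) := funext fun y => hgsym y j i
  rw [e1]
  ring

/-- covariant derivative of a combination `B = f1·T1 + f2·T2`. -/
lemma covD2_comb {g ginv B T1 T2 : (Fin n → ℝ) → Fin n → Fin n → ℝ}
    {f1 f2 : (Fin n → ℝ) → ℝ}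
    (hT1C : ∀ i j, ContDiff ℝ (⊤ : ℕ∞) (fun x => T1 x i j))
    (hT2C : ∀ i j, ContDiff ℝ (⊤ : ℕ∞) (fun x => T2 x i j))
    (hf1 : ContDiff ℝ (⊤ : ℕ∞) f1) (hf2 : ContDiff ℝ (⊤ : ℕ∞) f2)
    (hB : ∀ x i j, B x i j = f1 x * T1 x i j + f2 x * T2 x i j)
    (i j k : Fin n) (x : Fin n → ℝ) :
    covD2 g ginv B i j k x
      = pd k f1 x * T1 x i j + f1 x * covD2 g ginv T1 i j k x
        + pd k f2 x * T2 x i j + f2 x * covD2 g ginv T2 i j k x := by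
  unfold covD2
  have hfun : (fun y => B y i j) = fun y => f1 y * T1 y i j + f2 y * T2 y i j :=
    funext fun y => hB y i j
  rw [hfun]
  rw [pd_add (f := fun y => f1 y * T1 y i j) (g := fun y => f2 y * T2 y i j) ((diffAt hf1 x).mul (diffAt (hT1C i j) x))
      ((diffAt hf2 x).mul (diffAt (hT2C i j) x)) k,
    pd_mul (diffAt hf1 x) (diffAt (hT1C i j) x) k,
    pd_mul (diffAt hf2 x) (diffAt (hT2C i j) x) k]
  have hS1 : (∑ p, christoffel g ginv p i k x * B x p j)
      = f1 x * (∑ p, christoffel g ginv p i k x * T1 x p j)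
        + f2 x * (∑ p, christoffel g ginv p i k x * T2 x p j) := by
    rw [Finset.mul_sum, Finset.mul_sum, ← Finset.sum_add_distrib]
    exact Finset.sum_congr rfl fun p _ => by rw [hB x p j]; ring
  have hS2 : (∑ p, christoffel g ginv p j k x * B x i p)
      = f1 x * (∑ p, christoffel g ginv p j k x * T1 x i p)
        + f2 x * (∑ p, christoffel g ginv p j k x * T2 x i p) := by
    rw [Finset.mul_sum, Finset.mul_sum, ← Finset.sum_add_distrib]
    exact Finset.sum_congr rfl fun p _ => by rw [hB x i p]; ring
  rw [hS1, hS2]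
  ring


lemma cdPd {f : (Fin n → ℝ) → ℝ} (hf : ContDiff ℝ (⊤ : ℕ∞) f) (i : Fin n) :
    ContDiff ℝ (⊤ : ℕ∞) fun x => pd i f x := by
  have h1 : ContDiff ℝ (⊤ : ℕ∞) (fderiv ℝ f) := hf.fderiv_right (by simp)
  exact h1.clm_apply contDiff_const

lemma pdSum {ι : Type} (s : Finset ι) {f : ι → (Fin n → ℝ) → ℝ} {x : Fin n → ℝ}
    (hf : ∀ a, DifferentiableAt ℝ (f a) x) (i : Fin n) :
    pd i (fun y => ∑ a ∈ s, f a y) x = ∑ a ∈ s, pd i (f a) x := by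
  unfold pd
  rw [fderiv_fun_sum (fun a _ => hf a)]
  simp

lemma pdComm {f : (Fin n → ℝ) → ℝ} (hf : ContDiff ℝ (⊤ : ℕ∞) f) (k l : Fin n)
    (x : Fin n → ℝ) :
    pd l (fun y => pd k f y) x = pd k (fun y => pd l f y) x := by
  have hsymm : IsSymmSndFDerivAt ℝ f x := (hf.contDiffAt (x := x)).isSymmSndFDerivAt
    (by rw [minSmoothness_of_isRCLikeNormedField]; exact WithTop.coe_le_coe.mpr le_top)
  have h2 : DifferentiableAt ℝ (fderiv ℝ f) x :=
    ((hf.fderiv_right (m := (⊤ : ℕ∞)) (by simp)).differentiable (by simp)).differentiableAt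
  have hd : ∀ e : Fin n → ℝ, HasFDerivAt (fun y => fderiv ℝ f y e)
      ((fderiv ℝ f x).comp (0 : (Fin n → ℝ) →L[ℝ] (Fin n → ℝ)) + (fderiv ℝ (fderiv ℝ f) x).flip e) x :=
    fun e => h2.hasFDerivAt.clm_apply (hasFDerivAt_const e x)
  unfold pd
  rw [(hd _).fderiv, (hd _).fderiv]
  simp only [ContinuousLinearMap.add_apply, ContinuousLinearMap.comp_apply,
    ContinuousLinearMap.zero_apply, map_zero, ContinuousLinearMap.flip_apply, zero_add]
  exact hsymm _ _

lemma fderivSumPd {f : (Fin n → ℝ) → ℝ} (y v : Fin n → ℝ) :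
    fderiv ℝ f y v = ∑ k, v k * pd k f y := by
  have hv : v = ∑ i, v i • (Pi.single i (1:ℝ) : Fin n → ℝ) := by
    funext j
    rw [Finset.sum_apply]
    simp [Pi.single_apply]
  conv_lhs => rw [hv]
  rw [map_sum]
  simp only [map_smul, smul_eq_mul, pd]

/-- `F` is a linear combination of the `U a` with smooth coefficients. -/
def LinOf {ι : Type} [Fintype ι] (U : ι → (Fin n → ℝ) → ℝ) (F : (Fin n → ℝ) → ℝ) : Prop :=
  ∃ c : ι → (Fin n → ℝ) → ℝ, (∀ a, ContDiff ℝ (⊤ : ℕ∞) (c a)) ∧ ∀ x, F x = ∑ a, c a x * U a x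

lemma LinOf.congr {ι : Type} [Fintype ι] {U : ι → (Fin n → ℝ) → ℝ} {F G : (Fin n → ℝ) → ℝ}
    (h : LinOf U F) (hFG : ∀ x, F x = G x) : LinOf U G := by
  obtain ⟨c, hc, hF⟩ := h
  exact ⟨c, hc, fun x => by rw [← hFG, hF]⟩

lemma LinOf.add {ι : Type} [Fintype ι] {U : ι → (Fin n → ℝ) → ℝ} {F G : (Fin n → ℝ) → ℝ}
    (hF : LinOf U F) (hG : LinOf U G) : LinOf U (fun x => F x + G x) := by
  obtain ⟨c, hc, hF⟩ := hF
  obtain ⟨d, hd, hG⟩ := hG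
  refine ⟨fun a x => c a x + d a x, fun a => (hc a).add (hd a), fun x => ?_⟩
  show F x + G x = ∑ a, (c a x + d a x) * U a x
  rw [hF x, hG x, ← Finset.sum_add_distrib]
  exact Finset.sum_congr rfl fun a _ => by ring

lemma LinOf.sub {ι : Type} [Fintype ι] {U : ι → (Fin n → ℝ) → ℝ} {F G : (Fin n → ℝ) → ℝ}
    (hF : LinOf U F) (hG : LinOf U G) : LinOf U (fun x => F x - G x) := by
  obtain ⟨c, hc, hF⟩ := hF
  obtain ⟨d, hd, hG⟩ := hG
  refine ⟨fun a x => c a x - d a x, fun a => (hc a).sub (hd a), fun x => ?_⟩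
  show F x - G x = ∑ a, (c a x - d a x) * U a x
  rw [hF x, hG x, ← Finset.sum_sub_distrib]
  exact Finset.sum_congr rfl fun a _ => by ring

lemma LinOf.smul {ι : Type} [Fintype ι] {U : ι → (Fin n → ℝ) → ℝ} {F h : (Fin n → ℝ) → ℝ}
    (hh : ContDiff ℝ (⊤ : ℕ∞) h) (hF : LinOf U F) : LinOf U (fun x => h x * F x) := by
  obtain ⟨c, hc, hF⟩ := hF
  refine ⟨fun a x => h x * c a x, fun a => hh.mul (hc a), fun x => ?_⟩
  show h x * F x = ∑ a, (h x * c a x) * U a x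
  rw [hF x, Finset.mul_sum]
  exact Finset.sum_congr rfl fun a _ => by ring

lemma LinOf.sum {ι κ : Type} [Fintype ι] [Fintype κ] {U : ι → (Fin n → ℝ) → ℝ}
    {F : κ → (Fin n → ℝ) → ℝ} (h : ∀ s, LinOf U (F s)) : LinOf U (fun x => ∑ s, F s x) := by
  choose c hc hF using h
  refine ⟨fun a x => ∑ s, c s a x, fun a => ContDiff.sum fun s _ => hc s a, fun x => ?_⟩
  show ∑ s, F s x = ∑ a, (∑ s, c s a x) * U a x
  simp only [hF]
  rw [Finset.sum_comm]
  exact Finset.sum_congr rfl fun a _ => by rw [Finset.sum_mul]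

lemma LinOf.gen {ι : Type} [Fintype ι] {U : ι → (Fin n → ℝ) → ℝ} (a : ι) : LinOf U (U a) := by
  classical
  refine ⟨fun b _ => if b = a then 1 else 0, fun b => contDiff_const, fun x => ?_⟩
  simp

lemma LinOf.trans {ι κ : Type} [Fintype ι] [Fintype κ] {U : ι → (Fin n → ℝ) → ℝ}
    {V : κ → (Fin n → ℝ) → ℝ} {F : (Fin n → ℝ) → ℝ}
    (hF : LinOf U F) (hUV : ∀ a, LinOf V (U a)) : LinOf V F := by
  obtain ⟨c, hc, hF⟩ := hF
  exact (LinOf.sum fun a => LinOf.smul (hc a) (hUV a)).congr fun x => (hF x).symm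

lemma LinOf.diff {ι κ : Type} [Fintype ι] [Fintype κ] {U : ι → (Fin n → ℝ) → ℝ}
    {V : κ → (Fin n → ℝ) → ℝ} {F : (Fin n → ℝ) → ℝ}
    (hU : ∀ a, ContDiff ℝ (⊤ : ℕ∞) (U a)) (hUV : ∀ a, LinOf V (U a))
    (hdU : ∀ a k, LinOf V (fun x => pd k (U a) x)) (hF : LinOf U F) (k : Fin n) :
    LinOf V (fun x => pd k F x) := by
  obtain ⟨c, hc, hFc⟩ := hF
  have hFe : F = fun x => ∑ a, c a x * U a x := funext hFc
  have key : ∀ x, pd k F x = ∑ a, (c a x * pd k (U a) x + pd k (c a) x * U a x) := by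
    intro x
    rw [hFe]
    refine (pdSum Finset.univ (f := fun a y => c a y * U a y)
      (fun a => (diffAt (hc a) x).mul (diffAt (hU a) x)) k).trans
      (Finset.sum_congr rfl fun a _ => ?_)
    show pd k (fun y => c a y * U a y) x = _
    rw [pd_mul (diffAt (hc a) x) (diffAt (hU a) x) k]; ring
  exact (LinOf.sum fun a => (LinOf.smul (hc a) (hdU a k)).add
    (LinOf.smul (cdPd (hc a) k) (hUV a))).congr fun x => (key x).symm

lemma ucCore {ι : Type} [Fintype ι] (U : ι → (Fin n → ℝ) → ℝ)
    (hU : ∀ a, ContDiff ℝ (⊤ : ℕ∞) (U a))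
    (hd : ∀ a k, LinOf U (fun x => pd k (U a) x)) (x₀ : Fin n → ℝ) (h0 : ∀ a, U a x₀ = 0)
    (x : Fin n → ℝ) (a : ι) : U a x = 0 := by
  choose c hc hcoef using hd
  have hcoef' : ∀ b k y, pd k (U b) y = ∑ b', c b k b' y * U b' y := fun b k y => hcoef b k y
  obtain ⟨v, hv⟩ : ∃ v : Fin n → ℝ, v = x - x₀ := ⟨_, rfl⟩
  obtain ⟨γ, hγ⟩ : ∃ γ : ℝ → (Fin n → ℝ), γ = fun t => x₀ + t • v := ⟨_, rfl⟩
  have hγd : ∀ t, HasDerivAt γ v t := by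
    intro t
    rw [hγ]
    simpa using ((hasDerivAt_id t).smul_const v).const_add x₀
  have hγc : Continuous γ := by rw [hγ]; fun_prop
  obtain ⟨f, hf⟩ : ∃ f : ℝ → ι → ℝ, f = fun t b => U b (γ t) := ⟨_, rfl⟩
  obtain ⟨f', hf'⟩ : ∃ f' : ℝ → ι → ℝ, f' = fun t b => ∑ k, v k * pd k (U b) (γ t) :=
    ⟨_, rfl⟩
  have hfd : ∀ t, HasDerivAt f (f' t) t := by
    intro t
    rw [hf, hf', hasDerivAt_pi]
    intro b
    have h1 := ((diffAt (hU b) (γ t)).hasFDerivAt).comp_hasDerivAt t (hγd t)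
    rw [fderivSumPd] at h1
    exact h1
  obtain ⟨h, hh⟩ : ∃ h : ℝ → ℝ, h = fun t => ∑ b, ∑ k, ∑ b', |v k| * |c b k b' (γ t)| :=
    ⟨_, rfl⟩
  have hcont : Continuous h := by
    rw [hh]
    exact continuous_finset_sum _ fun b _ => continuous_finset_sum _ fun k _ =>
      continuous_finset_sum _ fun b' _ => continuous_const.mul (((hc b k b').continuous.comp hγc).abs)
  obtain ⟨C, hC⟩ :=
    (isCompact_Icc (a := (0:ℝ)) (b := 1)).exists_bound_of_continuousOn hcont.continuousOn
  have hC0 : 0 ≤ C := le_trans (norm_nonneg _) (hC 0 (by simp))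
  have hbound : ∀ t ∈ Set.Ico (0:ℝ) 1, ‖f' t‖ ≤ C * ‖f t‖ + 0 := by
    intro t ht
    have hht : h t ≤ C := by
      have := hC t (Set.Ico_subset_Icc_self ht)
      rw [Real.norm_eq_abs] at this
      exact (le_abs_self _).trans this
    rw [add_zero]
    refine (pi_norm_le_iff_of_nonneg (mul_nonneg hC0 (norm_nonneg _))).mpr fun b => ?_
    have hU' : ∀ b', |U b' (γ t)| ≤ ‖f t‖ := fun b' => by
      have e : f t b' = U b' (γ t) := by rw [hf]
      rw [← e, ← Real.norm_eq_abs]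
      exact norm_le_pi_norm (f t) b'
    have e1 : f' t b = ∑ k, v k * ∑ b', c b k b' (γ t) * U b' (γ t) := by
      rw [hf']
      exact Finset.sum_congr rfl fun k _ => by rw [hcoef' b k (γ t)]
    rw [e1, Real.norm_eq_abs]
    have step : ∀ k, |v k * ∑ b', c b k b' (γ t) * U b' (γ t)|
        ≤ (∑ b', |v k| * |c b k b' (γ t)|) * ‖f t‖ := by
      intro k
      rw [abs_mul, Finset.sum_mul]
      calc |v k| * |∑ b', c b k b' (γ t) * U b' (γ t)|
          ≤ |v k| * ∑ b', |c b k b' (γ t) * U b' (γ t)| :=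
            mul_le_mul_of_nonneg_left (Finset.abs_sum_le_sum_abs _ _) (abs_nonneg _)
        _ = ∑ b', |v k| * (|c b k b' (γ t)| * |U b' (γ t)|) := by
            rw [Finset.mul_sum]; simp only [abs_mul]
        _ ≤ ∑ b', |v k| * |c b k b' (γ t)| * ‖f t‖ := by
            refine Finset.sum_le_sum fun b' _ => ?_
            rw [mul_assoc]
            exact mul_le_mul_of_nonneg_left
              (mul_le_mul_of_nonneg_left (hU' b') (abs_nonneg _)) (abs_nonneg _)
    have hsum : (∑ k, ∑ b', |v k| * |c b k b' (γ t)|) ≤ h t := by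
      rw [hh]
      exact Finset.single_le_sum (f := fun b => ∑ k, ∑ b', |v k| * |c b k b' (γ t)|)
        (fun b _ => by positivity) (Finset.mem_univ b)
    calc |∑ k, v k * ∑ b', c b k b' (γ t) * U b' (γ t)|
        ≤ ∑ k, |v k * ∑ b', c b k b' (γ t) * U b' (γ t)| := Finset.abs_sum_le_sum_abs _ _
      _ ≤ ∑ k, (∑ b', |v k| * |c b k b' (γ t)|) * ‖f t‖ := Finset.sum_le_sum fun k _ => step k
      _ = (∑ k, ∑ b', |v k| * |c b k b' (γ t)|) * ‖f t‖ := by rw [Finset.sum_mul]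
      _ ≤ h t * ‖f t‖ := mul_le_mul_of_nonneg_right hsum (norm_nonneg _)
      _ ≤ C * ‖f t‖ := mul_le_mul_of_nonneg_right hht (norm_nonneg _)
  have hfc : ContinuousOn f (Set.Icc 0 1) := fun t _ => (hfd t).continuousAt.continuousWithinAt
  have hf0 : ‖f 0‖ ≤ 0 := by
    have e : f 0 = 0 := by
      rw [hf, hγ]; funext b; simp [h0]
    rw [e, norm_zero]
  have hg := norm_le_gronwallBound_of_norm_deriv_right_le hfc
    (fun t _ => (hfd t).hasDerivWithinAt) hf0 hbound 1 (by simp)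
  rw [gronwallBound_ε0_δ0] at hg
  have e1 : f 1 = 0 := norm_le_zero_iff.mp hg
  have e2 : f 1 a = U a x := by rw [hf, hγ, hv]; simp
  have := congrFun e1 a
  rw [e2] at this
  exact this

lemma ginvSymm {G Gi : Fin n → Fin n → ℝ} (hGs : ∀ i j, G i j = G j i)
    (hGinv : ∀ i j, (∑ k, G i k * Gi k j) = if i = j then (1:ℝ) else 0) :
    ∀ i j, Gi i j = Gi j i := by
  have hMN : (Matrix.of G) * (Matrix.of Gi) = 1 := by
    ext i j
    simp only [Matrix.mul_apply, Matrix.of_apply, Matrix.one_apply]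
    exact hGinv i j
  have hinvM : Matrix.of Gi = (Matrix.of G)⁻¹ := (Matrix.inv_eq_right_inv hMN).symm
  have hT : Matrix.transpose (Matrix.of G) = Matrix.of G := by
    ext i j
    simp only [Matrix.transpose_apply, Matrix.of_apply]
    exact hGs j i
  have hT2 : Matrix.transpose (Matrix.of Gi) = Matrix.of Gi := by
    rw [hinvM, Matrix.transpose_nonsing_inv, hT]
  intro i j
  have h := congrFun (congrFun hT2 j) i
  simp only [Matrix.transpose_apply, Matrix.of_apply] at h
  exact h

lemma traceN {G Gi : Fin n → Fin n → ℝ} (hGis : ∀ i j, Gi i j = Gi j i)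
    (hGinv : ∀ i j, (∑ k, G i k * Gi k j) = if i = j then (1:ℝ) else 0) :
    (∑ j, ∑ k, Gi j k * G j k) = (n:ℝ) := by
  have h1 : ∀ j, (∑ k, Gi j k * G j k) = 1 := by
    intro j
    have h2 := hGinv j j
    rw [if_pos rfl] at h2
    rw [← h2]
    exact Finset.sum_congr rfl fun k _ => by rw [hGis j k]; ring
  simp [h1]

lemma contr2 {G Gi : Fin n → Fin n → ℝ} (hGs : ∀ i j, G i j = G j i)
    (hGis : ∀ i j, Gi i j = Gi j i)
    (hGinv : ∀ i j, (∑ k, G i k * Gi k j) = if i = j then (1:ℝ) else 0)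
    (M : Fin n → Fin n → ℝ) (l i : Fin n) :
    (∑ j, ∑ k, Gi j k * (M l i * G j k + M l j * G i k - M k i * G j l - M k j * G i l))
      = (n:ℝ) * M l i - (∑ j, ∑ k, Gi j k * M k j) * G i l := by
  have s1 : (∑ j, ∑ k, Gi j k * (M l i * G j k)) = (n:ℝ) * M l i := by
    rw [← traceN hGis hGinv, Finset.sum_mul]
    exact Finset.sum_congr rfl fun j _ => by
      rw [Finset.sum_mul]; exact Finset.sum_congr rfl fun k _ => by ring
  have s2 : (∑ j, ∑ k, Gi j k * (M l j * G i k)) = M l i := by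
    calc (∑ j, ∑ k, Gi j k * (M l j * G i k)) = ∑ j, M l j * (∑ k, G i k * Gi k j) := by
          refine Finset.sum_congr rfl fun j _ => ?_
          rw [Finset.mul_sum]
          exact Finset.sum_congr rfl fun k _ => by rw [hGis j k]; ring
      _ = M l i := by simp [hGinv]
  have s3 : (∑ j, ∑ k, Gi j k * (M k i * G j l)) = M l i := by
    calc (∑ j, ∑ k, Gi j k * (M k i * G j l)) = ∑ k, M k i * (∑ j, G l j * Gi j k) := by
          rw [Finset.sum_comm]
          refine Finset.sum_congr rfl fun k _ => ?_
          rw [Finset.mul_sum]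
          exact Finset.sum_congr rfl fun j _ => by rw [hGs j l]; ring
      _ = M l i := by simp [hGinv]
  have s4 : (∑ j, ∑ k, Gi j k * (M k j * G i l)) = (∑ j, ∑ k, Gi j k * M k j) * G i l := by
    rw [Finset.sum_mul]
    exact Finset.sum_congr rfl fun j _ => by
      rw [Finset.sum_mul]; exact Finset.sum_congr rfl fun k _ => by ring
  simp only [mul_add, mul_sub, Finset.sum_add_distrib, Finset.sum_sub_distrib]
  rw [s1, s2, s3, s4]
  ring

lemma contr3 {G Gi : Fin n → Fin n → ℝ} (hGs : ∀ i j, G i j = G j i)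
    (hGis : ∀ i j, Gi i j = Gi j i)
    (hGinv : ∀ i j, (∑ k, G i k * Gi k j) = if i = j then (1:ℝ) else 0)
    (w : Fin n → ℝ) (k : Fin n) :
    (∑ i, ∑ l, Gi i l * (w k * G i l - w l * G i k)) = ((n:ℝ) - 1) * w k := by
  have t1 : (∑ i, ∑ l, Gi i l * (w k * G i l)) = (n:ℝ) * w k := by
    rw [← traceN hGis hGinv, Finset.sum_mul]
    exact Finset.sum_congr rfl fun i _ => by
      rw [Finset.sum_mul]; exact Finset.sum_congr rfl fun l _ => by ring
  have t2 : (∑ i, ∑ l, Gi i l * (w l * G i k)) = w k := by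
    calc (∑ i, ∑ l, Gi i l * (w l * G i k)) = ∑ l, w l * (∑ i, G k i * Gi i l) := by
          rw [Finset.sum_comm]
          refine Finset.sum_congr rfl fun l _ => ?_
          rw [Finset.mul_sum]
          exact Finset.sum_congr rfl fun i _ => by rw [hGs i k]; ring
      _ = w k := by simp [hGinv]
  simp only [mul_sub, Finset.sum_sub_distrib]
  rw [t1, t2]
  ring

lemma cdChris {g ginv : (Fin n → ℝ) → Fin n → Fin n → ℝ}
    (hgC : ∀ i j, ContDiff ℝ (⊤ : ℕ∞) (fun x => g x i j))
    (hginvC : ∀ i j, ContDiff ℝ (⊤ : ℕ∞) (fun x => ginv x i j)) (k i j : Fin n) :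
    ContDiff ℝ (⊤ : ℕ∞) (fun x => christoffel g ginv k i j x) := by
  unfold christoffel
  exact contDiff_const.mul (ContDiff.sum fun l _ => (hginvC k l).mul
    (((cdPd (hgC l j) i).add (cdPd (hgC l i) j)).sub (cdPd (hgC i j) l)))

/-- The Christoffel part of `covD2`. -/
def Pt (g ginv B : (Fin n → ℝ) → Fin n → Fin n → ℝ) (k i j : Fin n) (x : Fin n → ℝ) : ℝ :=
  (∑ p, christoffel g ginv p i k x * B x p j) + ∑ p, christoffel g ginv p j k x * B x i p

def UB (B : (Fin n → ℝ) → Fin n → Fin n → ℝ) : Fin n × Fin n → (Fin n → ℝ) → ℝ :=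
  fun a x => B x a.1 a.2

def U2 (B : (Fin n → ℝ) → Fin n → Fin n → ℝ) (Λ : (Fin n → ℝ) → ℝ) :
    (Fin n × Fin n) ⊕ Fin n → (Fin n → ℝ) → ℝ :=
  Sum.elim (UB B) (fun i x => pd i Λ x)

def U3 (B : (Fin n → ℝ) → Fin n → Fin n → ℝ) (Λ τ : (Fin n → ℝ) → ℝ) :
    ((Fin n × Fin n) ⊕ Fin n) ⊕ Unit → (Fin n → ℝ) → ℝ :=
  Sum.elim (U2 B Λ) (fun _ => τ)

/-- Unique continuation for smooth solutions of the Sinjukov equation. -/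
lemma ucMain (hn : 3 ≤ n) {g ginv B : (Fin n → ℝ) → Fin n → Fin n → ℝ}
    {Λ : (Fin n → ℝ) → ℝ}
    (hgC : ∀ i j, ContDiff ℝ (⊤ : ℕ∞) (fun x => g x i j))
    (hginvC : ∀ i j, ContDiff ℝ (⊤ : ℕ∞) (fun x => ginv x i j))
    (hBC : ∀ i j, ContDiff ℝ (⊤ : ℕ∞) (fun x => B x i j))
    (hΛC : ContDiff ℝ (⊤ : ℕ∞) Λ)
    (hgsym : ∀ x i j, g x i j = g x j i)
    (hinv : ∀ x i j, (∑ k, g x i k * ginv x k j) = if i = j then (1:ℝ) else 0)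
    (hB : ∀ x i j k, covD2 g ginv B i j k x = pd i Λ x * g x j k + pd j Λ x * g x i k)
    (x₀ : Fin n → ℝ) (hB0 : ∀ i j, B x₀ i j = 0)
    (hL0 : ∀ᶠ y in nhds x₀, ∀ i, pd i Λ y = 0) :
    ∀ x i j, B x i j = 0 := by
  have hn0 : (n:ℝ) ≠ 0 := by
    have : 0 < n := by omega
    exact_mod_cast this.ne'
  have hn1 : (n:ℝ) - 1 ≠ 0 := by
    have : (3:ℝ) ≤ n := by exact_mod_cast hn
    linarith
  have hginvsym : ∀ x i j, ginv x i j = ginv x j i := fun x => ginvSymm (hgsym x) (hinv x)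
  have hΓC : ∀ p i k, ContDiff ℝ (⊤ : ℕ∞) (fun x => christoffel g ginv p i k x) :=
    fun p i k => cdChris hgC hginvC p i k
  have hLC : ∀ i, ContDiff ℝ (⊤ : ℕ∞) (fun x => pd i Λ x) := fun i => cdPd hΛC i
  have hPC : ∀ k i j, ContDiff ℝ (⊤ : ℕ∞) (Pt g ginv B k i j) := fun k i j =>
    (ContDiff.sum fun p _ => (hΓC p i k).mul (hBC p j)).add
      (ContDiff.sum fun p _ => (hΓC p j k).mul (hBC i p))
  have hdB : ∀ x i j k, pd k (fun y => B y i j) x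
      = pd i Λ x * g x j k + pd j Λ x * g x i k + Pt g ginv B k i j x := by
    intro x i j k
    have h := hB x i j k
    unfold covD2 at h
    unfold Pt
    linarith
  have hP : ∀ k i j, LinOf (UB B) (Pt g ginv B k i j) := fun k i j =>
    ((LinOf.sum fun p => LinOf.smul (hΓC p i k) (LinOf.gen (U := UB B) (p, j))).add
      (LinOf.sum fun p => LinOf.smul (hΓC p j k) (LinOf.gen (U := UB B) (i, p)))).congr
      fun x => rfl
  have hUBC : ∀ a, ContDiff ℝ (⊤ : ℕ∞) (UB B a) := fun a => hBC a.1 a.2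
  have hUB2 : ∀ a, LinOf (U2 B Λ) (UB B a) := fun a => LinOf.gen (U := U2 B Λ) (Sum.inl a)
  have hdUB : ∀ a k, LinOf (U2 B Λ) (fun x => pd k (UB B a) x) := by
    rintro ⟨i, j⟩ k
    exact (((LinOf.smul (hgC j k) (LinOf.gen (U := U2 B Λ) (Sum.inr i))).add
      (LinOf.smul (hgC i k) (LinOf.gen (U := U2 B Λ) (Sum.inr j)))).add
      ((hP k i j).trans hUB2)).congr fun x => by
        simp only [U2, Sum.elim_inr]
        rw [show UB B (i, j) = fun y => B y i j from rfl, hdB]; ring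
  have hE1 : ∀ l k i j, LinOf (U2 B Λ) (fun x => pd l (fun y => pd k (fun z => B z i j) y) x
      - pd l (fun y => pd i Λ y) x * g x j k - pd l (fun y => pd j Λ y) x * g x i k) := by
    intro l k i j
    have hdP := LinOf.diff hUBC hUB2 hdUB (hP k i j) l
    refine (((LinOf.smul (cdPd (hgC j k) l) (LinOf.gen (U := U2 B Λ) (Sum.inr i))).add
      (LinOf.smul (cdPd (hgC i k) l) (LinOf.gen (U := U2 B Λ) (Sum.inr j)))).add hdP).congr ?_
    intro x
    have e : (fun y => pd k (fun z => B z i j) y)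
        = fun y => (pd i Λ y * g y j k + pd j Λ y * g y i k) + Pt g ginv B k i j y :=
      funext fun y => hdB y i j k
    rw [e, pd_add (f := fun y => pd i Λ y * g y j k + pd j Λ y * g y i k)
        (g := Pt g ginv B k i j)
        (((diffAt (hLC i) x).mul (diffAt (hgC j k) x)).add
          ((diffAt (hLC j) x).mul (diffAt (hgC i k) x))) (diffAt (hPC k i j) x),
      pd_add (f := fun y => pd i Λ y * g y j k) (g := fun y => pd j Λ y * g y i k)
        ((diffAt (hLC i) x).mul (diffAt (hgC j k) x))
        ((diffAt (hLC j) x).mul (diffAt (hgC i k) x)),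
      pd_mul (diffAt (hLC i) x) (diffAt (hgC j k) x),
      pd_mul (diffAt (hLC j) x) (diffAt (hgC i k) x)]
    simp only [U2, Sum.elim_inr]
    ring
  have hD : ∀ l k i j, LinOf (U2 B Λ) (fun x =>
      pd l (fun y => pd i Λ y) x * g x j k + pd l (fun y => pd j Λ y) x * g x i k
      - pd k (fun y => pd i Λ y) x * g x j l - pd k (fun y => pd j Λ y) x * g x i l) := by
    intro l k i j
    refine ((hE1 k l i j).sub (hE1 l k i j)).congr ?_
    intro x
    have hs := pdComm (hBC i j) k l x
    linear_combination -hs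
  obtain ⟨τ, hτ⟩ : ∃ τ : (Fin n → ℝ) → ℝ, ∀ x,
      τ x = (1 / (n:ℝ)) * ∑ j, ∑ k, ginv x j k * pd k (fun y => pd j Λ y) x :=
    ⟨_, fun x => rfl⟩
  have hQ : ∀ l i, LinOf (U2 B Λ) (fun x => pd l (fun y => pd i Λ y) x - τ x * g x i l) := by
    intro l i
    refine (LinOf.smul (contDiff_const (c := 1 / (n:ℝ))) (LinOf.sum fun j => LinOf.sum fun k =>
      LinOf.smul (hginvC j k) (hD l k i j))).congr ?_
    intro x
    have hc := contr2 (hgsym x) (hginvsym x) (hinv x)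
      (fun a b => pd a (fun y => pd b Λ y) x) l i
    have hnn : (1 / (n:ℝ)) * (n:ℝ) = 1 := one_div_mul_cancel hn0
    rw [hτ x]
    linear_combination (1 / (n:ℝ)) * hc + pd l (fun y => pd i Λ y) x * hnn
  have hτC : ContDiff ℝ (⊤ : ℕ∞) τ := by
    have e : τ = fun x => (1 / (n:ℝ)) * ∑ j, ∑ k, ginv x j k * pd k (fun y => pd j Λ y) x :=
      funext hτ
    rw [e]
    exact contDiff_const.mul (ContDiff.sum fun j _ => ContDiff.sum fun k _ =>
      (hginvC j k).mul (cdPd (hLC j) k))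
  have hU2C : ∀ a, ContDiff ℝ (⊤ : ℕ∞) (U2 B Λ a) := by
    rintro (⟨i, j⟩ | i)
    · exact hBC i j
    · exact hLC i
  have hU23 : ∀ a, LinOf (U3 B Λ τ) (U2 B Λ a) := fun a => LinOf.gen (U := U3 B Λ τ) (Sum.inl a)
  have hτ3 : LinOf (U3 B Λ τ) τ := LinOf.gen (U := U3 B Λ τ) (Sum.inr ())
  have hdU2 : ∀ a k, LinOf (U3 B Λ τ) (fun x => pd k (U2 B Λ a) x) := by
    rintro (a | i) k
    · exact (hdUB a k).trans hU23
    · exact ((LinOf.smul (hgC i k) hτ3).add ((hQ k i).trans hU23)).congr fun x => by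
        simp only [U2, Sum.elim_inr]; ring
  have hdQ : ∀ l i k, LinOf (U3 B Λ τ)
      (fun x => pd k (fun x => pd l (fun y => pd i Λ y) x - τ x * g x i l) x) :=
    fun l i k => LinOf.diff hU2C hU23 hdU2 (hQ l i) k
  have hT : ∀ k l i x, pd k (fun y => pd l (fun z => pd i Λ z) y) x
      = (τ x * pd k (fun y => g y i l) x + g x i l * pd k τ x)
        + pd k (fun y => pd l (fun z => pd i Λ z) y - τ y * g y i l) x := by
    intro k l i x
    have hMd : DifferentiableAt ℝ (fun y => pd l (fun z => pd i Λ z) y) x :=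
      diffAt (cdPd (hLC i) l) x
    have e : (fun y => pd l (fun z => pd i Λ z) y)
        = fun y => τ y * g y i l + (pd l (fun z => pd i Λ z) y - τ y * g y i l) :=
      funext fun y => by ring
    rw [e, pd_add (f := fun y => τ y * g y i l)
        (g := fun y => pd l (fun z => pd i Λ z) y - τ y * g y i l)
        ((diffAt hτC x).mul (diffAt (hgC i l) x))
        (hMd.sub ((diffAt hτC x).mul (diffAt (hgC i l) x))),
      pd_mul (diffAt hτC x) (diffAt (hgC i l) x)]
  have hR : ∀ k l i, LinOf (U3 B Λ τ) (fun x => pd k τ x * g x i l - pd l τ x * g x i k) := by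
    intro k l i
    refine (((LinOf.smul (cdPd (hgC i k) l) hτ3).add (hdQ k i l)).sub
      ((LinOf.smul (cdPd (hgC i l) k) hτ3).add (hdQ l i k))).congr ?_
    intro x
    have e1 := hT k l i x
    have e2 := hT l k i x
    have s := pdComm (hLC i) l k x
    linear_combination e1 - e2 - s
  have hτd : ∀ k, LinOf (U3 B Λ τ) (fun x => pd k τ x) := by
    intro k
    refine (LinOf.smul (contDiff_const (c := 1 / ((n:ℝ) - 1))) (LinOf.sum fun i =>
      LinOf.sum fun l => LinOf.smul (hginvC i l) (hR k l i))).congr ?_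
    intro x
    have hc := contr3 (hgsym x) (hginvsym x) (hinv x) (fun m => pd m τ x) k
    have hnn : (1 / ((n:ℝ) - 1)) * ((n:ℝ) - 1) = 1 := one_div_mul_cancel hn1
    linear_combination (1 / ((n:ℝ) - 1)) * hc + pd k τ x * hnn
  have hU3C : ∀ a, ContDiff ℝ (⊤ : ℕ∞) (U3 B Λ τ a) := by
    rintro (a | u)
    · exact hU2C a
    · exact hτC
  have hdU3 : ∀ a k, LinOf (U3 B Λ τ) (fun x => pd k (U3 B Λ τ a) x) := by
    rintro (a | u) k
    · exact hdU2 a k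
    · exact hτd k
  have h0 : ∀ a, U3 B Λ τ a x₀ = 0 := by
    rintro ((⟨i, j⟩ | i) | u)
    · exact hB0 i j
    · exact hL0.self_of_nhds i
    · show τ x₀ = 0
      rw [hτ x₀]
      have hz : ∀ j k, pd k (fun y => pd j Λ y) x₀ = 0 := by
        intro j k
        have hev : (fun y => pd j Λ y) =ᶠ[nhds x₀] fun _ => (0:ℝ) := hL0.mono fun y hy => hy j
        show fderiv ℝ (fun y => pd j Λ y) x₀ (Pi.single k 1) = 0
        rw [hev.fderiv_eq]
        simp
      simp [hz]
  intro x i j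
  exact ucCore (U3 B Λ τ) hU3C hdU3 x₀ h0 x (Sum.inl (Sum.inl (i, j)))

end Stmt13Aux

open Stmt13Aux in
/-- Lemma 3 of the paper: if two solutions `a`, `A` of the Sinjukov equation on a
connected pseudo-Riemannian manifold of dimension `n ≥ 3` satisfy
`a = c¹·g + c²·A` for smooth functions `c¹, c²`, and `A` is not a constant multiple
of `g`, then `c¹` and `c²` are constants. (Coordinates on ℝⁿ.) -/
theorem stmt_13 {n : ℕ} (hn : 3 ≤ n)
    (g ginv a A : (Fin n → ℝ) → Fin n → Fin n → ℝ)
    (c1 c2 : (Fin n → ℝ) → ℝ)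
    (hgC : ∀ i j, ContDiff ℝ (⊤ : ℕ∞) (fun x => g x i j))
    (hginvC : ∀ i j, ContDiff ℝ (⊤ : ℕ∞) (fun x => ginv x i j))
    (haC : ∀ i j, ContDiff ℝ (⊤ : ℕ∞) (fun x => a x i j))
    (hAC : ∀ i j, ContDiff ℝ (⊤ : ℕ∞) (fun x => A x i j))
    (hc1C : ContDiff ℝ (⊤ : ℕ∞) c1) (hc2C : ContDiff ℝ (⊤ : ℕ∞) c2)
    (hgsym : ∀ x i j, g x i j = g x j i)
    (hinv : ∀ x i j, (∑ k, g x i k * ginv x k j) = if i = j then (1:ℝ) else 0)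
    (hasym : ∀ x i j, a x i j = a x j i)
    (hAsym : ∀ x i j, A x i j = A x j i)
    (lam Lam : (Fin n → ℝ) → ℝ)
    (hlam : ∀ x, lam x = (1/2) * ∑ p, ∑ q, ginv x p q * a x p q)
    (hLam : ∀ x, Lam x = (1/2) * ∑ p, ∑ q, ginv x p q * A x p q)
    (ha : ∀ x i j k, covD2 g ginv a i j k x
      = pd i lam x * g x j k + pd j lam x * g x i k)
    (hA : ∀ x i j k, covD2 g ginv A i j k x
      = pd i Lam x * g x j k + pd j Lam x * g x i k)
    (hcomb : ∀ x i j, a x i j = c1 x * g x i j + c2 x * A x i j)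
    (hAnc : ¬ ∃ c : ℝ, ∀ x i j, A x i j = c * g x i j) :
    (∃ k : ℝ, ∀ x, c1 x = k) ∧ (∃ k : ℝ, ∀ x, c2 x = k) := by
  classical
  have hn0 : (n:ℝ) ≠ 0 := by
    have : 0 < n := by omega
    exact_mod_cast this.ne'
  -- the metric is parallel
  have hg0 : ∀ (x : Fin n → ℝ) i j k, covD2 g ginv g i j k x = 0 :=
    fun x i j k => covD2_g_zero hgsym hinv x i j k
  -- the master pointwise equation
  have hstar : ∀ (x : Fin n → ℝ) i j k,
      pd k c1 x * g x i j + pd k c2 x * A x i j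
        = (pd i lam x - c2 x * pd i Lam x) * g x j k
          + (pd j lam x - c2 x * pd j Lam x) * g x i k := by
    intro x i j k
    have h1 := covD2_comb (g := g) (ginv := ginv) (B := a) (T1 := g) (T2 := A)
      hgC hAC hc1C hc2C hcomb i j k x
    rw [ha x i j k, hg0 x i j k, hA x i j k] at h1
    linear_combination -h1
  -- smoothness of Lam
  have hLamC : ContDiff ℝ (⊤ : ℕ∞) Lam := by
    have hfun : Lam = fun x => (1/2) * ∑ p, ∑ q, ginv x p q * A x p q := funext hLam
    rw [hfun]
    exact contDiff_const.mul (ContDiff.sum fun p _ =>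
      ContDiff.sum fun q _ => (hginvC p q).mul (hAC p q))
  -- trace of ginv against g is n
  have htr : ∀ (x : Fin n → ℝ), (∑ k, ∑ l, ginv x k l * g x k l) = (n:ℝ) := by
    intro x
    have h1 : ∀ k, (∑ l, ginv x k l * g x k l) = 1 := by
      intro k
      have h2 := flip_inv (hinv x) k k
      simp only [if_true, eq_self_iff_true] at h2
      rw [← h2]
      exact Finset.sum_congr rfl fun l _ => by rw [hgsym x k l]
    simp [h1]
  -- main step: the gradient of c2 vanishes identically
  have hv0 : ∀ (x : Fin n → ℝ) k, pd k c2 x = 0 := by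
    by_contra hcon
    push_neg at hcon
    obtain ⟨x₀, k₀, hk₀⟩ := hcon
    -- on the open set where pd k₀ c2 ≠ 0, A is pointwise proportional to g
    have hΦW : ∀ (x : Fin n → ℝ), pd k₀ c2 x ≠ 0 → ∀ i j k l,
        A x i j * g x k l - A x k l * g x i j = 0 := by
      intro x hx i j k l
      have hstepb : ∀ (k' : Fin n) i j,
          (pd i lam x - c2 x * pd i Lam x) * (pd k₀ c2 x * g x j k' - pd k' c2 x * g x j k₀)
            + (pd j lam x - c2 x * pd j Lam x) *
              (pd k₀ c2 x * g x i k' - pd k' c2 x * g x i k₀) = 0 := by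
        intro k' i j
        have hstepa : ∀ i j,
            (pd k₀ c2 x * pd k' c1 x - pd k' c2 x * pd k₀ c1 x) * g x i j
              = (pd i lam x - c2 x * pd i Lam x) *
                  (pd k₀ c2 x * g x j k' - pd k' c2 x * g x j k₀)
                + (pd j lam x - c2 x * pd j Lam x) *
                  (pd k₀ c2 x * g x i k' - pd k' c2 x * g x i k₀) := by
          intro i j
          linear_combination (pd k₀ c2 x) * (hstar x i j k') - (pd k' c2 x) * (hstar x i j k₀)
        have hc0 := rank2 hn (hinv x) hstepa
        have h3 := hstepa i j
        rw [hc0, zero_mul] at h3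
        linarith
      -- μ = 0 at x
      have hmu : ∀ i, pd i lam x - c2 x * pd i Lam x = 0 := by
        by_contra hmu'
        push_neg at hmu'
        obtain ⟨i₀, hi₀⟩ := hmu'
        have hw : ∀ (k' j' : Fin n),
            pd k₀ c2 x * g x j' k' - pd k' c2 x * g x j' k₀ = 0 := by
          intro k' j'
          rcases sympair (fun i j => hstepb k' i j) with hl | hr
          · exact absurd (hl i₀) hi₀
          · exact hr j'
        obtain ⟨z, hz0, hvz, -⟩ := exists_perp hn (fun k => pd k c2 x) (fun k => pd k c2 x)
        have hgz : ∀ (j' : Fin n), (∑ k', g x j' k' * z k') = 0 := by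
          intro j'
          have h3 : pd k₀ c2 x * (∑ k', g x j' k' * z k') = 0 := by
            rw [Finset.mul_sum]
            calc ∑ k', pd k₀ c2 x * (g x j' k' * z k')
                = ∑ k', (pd k' c2 x * g x j' k₀) * z k' := by
                  refine Finset.sum_congr rfl fun k' _ => ?_
                  linear_combination (z k') * (hw k' j')
              _ = g x j' k₀ * ∑ k', pd k' c2 x * z k' := by
                  rw [Finset.mul_sum]
                  exact Finset.sum_congr rfl fun k' _ => by ring
              _ = 0 := by rw [hvz]; ring
          exact (mul_eq_zero.mp h3).resolve_left hx
        exact hz0 (funext (kill (hinv x) hgz))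
      -- pointwise proportionality
      have hprop : ∀ i j, pd k₀ c1 x * g x i j + pd k₀ c2 x * A x i j = 0 := by
        intro i j
        have h4 := hstar x i j k₀
        rw [hmu i, hmu j] at h4
        linarith
      have h6 : pd k₀ c2 x * (A x i j * g x k l - A x k l * g x i j) = 0 := by
        linear_combination g x k l * (hprop i j) - g x i j * (hprop k l)
      exact (mul_eq_zero.mp h6).resolve_left hx
    -- the set where pd k₀ c2 ≠ 0 is open
    have hWopen : IsOpen {x : Fin n → ℝ | pd k₀ c2 x ≠ 0} := by
      have hcont := contDiff_pd hc2C k₀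
      have heq : {x : Fin n → ℝ | pd k₀ c2 x ≠ 0}
          = (fun x => pd k₀ c2 x) ⁻¹' ({0}ᶜ) := rfl
      rw [heq]
      exact isOpen_compl_singleton.preimage hcont
    -- analytic continuation: A is pointwise proportional to g everywhere
    have hΦ : ∀ (x : Fin n → ℝ) i j k l, A x i j * g x k l = A x k l * g x i j := by
      obtain ⟨ρ, hρdef⟩ : ∃ ρ : (Fin n → ℝ) → ℝ, ρ = fun y => (2 / (n:ℝ)) * Lam y := ⟨_, rfl⟩
      have hρC' : ContDiff ℝ (⊤ : ℕ∞) ρ := by rw [hρdef]; exact contDiff_const.mul hLamC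
      have hAρW : ∀ (x : Fin n → ℝ), pd k₀ c2 x ≠ 0 → ∀ i j, A x i j = ρ x * g x i j := by
        intro x hx i j
        have h1 : (∑ k, ∑ l, ginv x k l * (A x i j * g x k l)) = A x i j * (n:ℝ) := by
          rw [← htr x, Finset.mul_sum]
          refine Finset.sum_congr rfl fun k _ => ?_
          rw [Finset.mul_sum]
          exact Finset.sum_congr rfl fun l _ => by ring
        have h2 : (∑ k, ∑ l, ginv x k l * (A x i j * g x k l))
            = ∑ k, ∑ l, ginv x k l * (A x k l * g x i j) := by
          refine Finset.sum_congr rfl fun k _ => Finset.sum_congr rfl fun l _ => ?_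
          rw [sub_eq_zero.mp (hΦW x hx i j k l)]
        have h3 : (∑ k, ∑ l, ginv x k l * (A x k l * g x i j))
            = (∑ k, ∑ l, ginv x k l * A x k l) * g x i j := by
          rw [Finset.sum_mul]
          refine Finset.sum_congr rfl fun k _ => ?_
          rw [Finset.sum_mul]
          exact Finset.sum_congr rfl fun l _ => by ring
        have h4 : (∑ k, ∑ l, ginv x k l * A x k l) = 2 * Lam x := by
          have h5 := hLam x
          linarith
        have hfin : A x i j * (n:ℝ) = 2 * Lam x * g x i j := by
          rw [← h1, h2, h3, h4]
        simp only [hρdef]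
        field_simp
        linarith
      obtain ⟨ε, hε, hball⟩ := Metric.isOpen_iff.mp hWopen x₀ hk₀
      have hρ0W : ∀ y ∈ Metric.ball x₀ ε, ∀ k, pd k ρ y = 0 := by
        intro y hy k
        have hev : ∀ p q, (fun z => A z p q) =ᶠ[nhds y] (fun z => ρ z * g z p q) := fun p q =>
          Filter.eventuallyEq_of_mem (Metric.isOpen_ball.mem_nhds hy)
            (fun z hz => hAρW z (hball hz) p q)
        have hloc : ∀ i j, covD2 g ginv A i j k y
            = covD2 g ginv (fun z p q => ρ z * g z p q) i j k y := by
          intro i j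
          unfold covD2 pd
          rw [(hev i j).fderiv_eq]
          simp only [hAρW y (hball hy)]
        have heq : ∀ i j, pd k ρ y * g y i j
            = pd i Lam y * g y j k + pd j Lam y * g y i k := by
          intro i j
          have h1 := covD2_comb (g := g) (ginv := ginv) (B := fun z p q => ρ z * g z p q)
            (T1 := g) (T2 := g) hgC hgC hρC' contDiff_const
            (f2 := fun _ => (0:ℝ)) (fun x i j => by ring) i j k y
          rw [← hloc i j, hA y i j k, hg0 y i j k] at h1
          have h2 := pd_const (n := n) (x := y) (0:ℝ) k
          rw [h2] at h1
          linarith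
        exact rank2 hn (hinv y) heq
      have hρconst : ∀ y ∈ Metric.ball x₀ ε, ρ y = ρ x₀ := fun y hy =>
        (convex_ball x₀ ε).is_const_of_fderivWithin_eq_zero
          (hρC'.differentiable (by simp)).differentiableOn
          (fun z hz => by
            rw [fderivWithin_of_isOpen Metric.isOpen_ball hz]
            exact fderiv_eq_zero_of_pd (hρ0W z hz)) hy (Metric.mem_ball_self hε)
      have hBeq : ∀ x i j k, covD2 g ginv (fun z p q => A z p q - ρ x₀ * g z p q) i j k x
          = pd i Lam x * g x j k + pd j Lam x * g x i k := by
        intro x i j k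
        have h1 := covD2_comb (g := g) (ginv := ginv)
          (B := fun z p q => A z p q - ρ x₀ * g z p q) (T1 := A) (T2 := g) hAC hgC
          (contDiff_const (c := (1:ℝ))) (contDiff_const (c := -ρ x₀))
          (fun x i j => by ring) i j k x
        rw [h1, hA x i j k, hg0 x i j k, pd_const, pd_const]
        ring
      have hL0 : ∀ᶠ y in nhds x₀, ∀ i, pd i Lam y = 0 := by
        filter_upwards [Metric.isOpen_ball.mem_nhds (Metric.mem_ball_self hε)] with y hy i
        have hev : Lam =ᶠ[nhds y] (fun _ => ((n:ℝ) / 2) * ρ x₀) := by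
          filter_upwards [Metric.isOpen_ball.mem_nhds hy] with z hz
          rw [← hρconst z hz]
          simp only [hρdef]
          rw [← mul_assoc, div_mul_div_comm, mul_comm (n:ℝ) 2,
            div_self (mul_ne_zero two_ne_zero hn0), one_mul]
        unfold pd
        rw [hev.fderiv_eq]
        simp
      have hB0 : ∀ i j, A x₀ i j - ρ x₀ * g x₀ i j = 0 := fun i j => by
        rw [hAρW x₀ hk₀ i j]; ring
      have hBz := ucMain hn (g := g) (ginv := ginv)
        (B := fun z p q => A z p q - ρ x₀ * g z p q) (Λ := Lam) hgC hginvC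
        (fun p q => (hAC p q).sub (contDiff_const.mul (hgC p q))) hLamC hgsym hinv hBeq
        x₀ hB0 hL0
      intro x i j k l
      have e1 : A x i j - ρ x₀ * g x i j = 0 := hBz x i j
      have e2 : A x k l - ρ x₀ * g x k l = 0 := hBz x k l
      linear_combination g x k l * e1 - g x i j * e2
    -- hence A = ρ g with ρ = (2/n)·Lam
    have hAρ : ∀ (x : Fin n → ℝ) i j, A x i j = ((2 / (n:ℝ)) * Lam x) * g x i j := by
      intro x i j
      have h1 : (∑ k, ∑ l, ginv x k l * (A x i j * g x k l)) = A x i j * (n:ℝ) := by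
        rw [← htr x, Finset.mul_sum]
        refine Finset.sum_congr rfl fun k _ => ?_
        rw [Finset.mul_sum]
        exact Finset.sum_congr rfl fun l _ => by ring
      have h2 : (∑ k, ∑ l, ginv x k l * (A x i j * g x k l))
          = ∑ k, ∑ l, ginv x k l * (A x k l * g x i j) := by
        refine Finset.sum_congr rfl fun k _ => Finset.sum_congr rfl fun l _ => ?_
        rw [hΦ x i j k l]
      have h3 : (∑ k, ∑ l, ginv x k l * (A x k l * g x i j))
          = (∑ k, ∑ l, ginv x k l * A x k l) * g x i j := by
        rw [Finset.sum_mul]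
        refine Finset.sum_congr rfl fun k _ => ?_
        rw [Finset.sum_mul]
        exact Finset.sum_congr rfl fun l _ => by ring
      have h4 : (∑ k, ∑ l, ginv x k l * A x k l) = 2 * Lam x := by
        have h5 := hLam x
        linarith
      have hfin : A x i j * (n:ℝ) = 2 * Lam x * g x i j := by
        rw [← h1, h2, h3, h4]
      field_simp
      linarith
    -- ρ has vanishing gradient
    have hρC : ContDiff ℝ (⊤ : ℕ∞) (fun y => (2 / (n:ℝ)) * Lam y) :=
      contDiff_const.mul hLamC
    have hρ0 : ∀ (x : Fin n → ℝ) k, pd k (fun y => (2 / (n:ℝ)) * Lam y) x = 0 := by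
      intro x k
      have heq : ∀ i j, pd k (fun y => (2 / (n:ℝ)) * Lam y) x * g x i j
          = pd i Lam x * g x j k + pd j Lam x * g x i k := by
        intro i j
        have h1 := covD2_comb (g := g) (ginv := ginv) (B := A) (T1 := g) (T2 := g)
          hgC hgC hρC contDiff_const
          (f2 := fun _ => (0:ℝ)) (fun x i j => by rw [hAρ x i j]; ring) i j k x
        rw [hA x i j k, hg0 x i j k] at h1
        have h2 := pd_const (n := n) (x := x) (0:ℝ) k
        rw [h2] at h1
        linarith
      exact rank2 hn (hinv x) heq
    -- hence ρ is constant and A = const · g : contradiction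
    have hconst : ∀ (y : Fin n → ℝ), (2 / (n:ℝ)) * Lam y = (2 / (n:ℝ)) * Lam x₀ :=
      fun y => is_const_of_fderiv_eq_zero (hρC.differentiable (by simp))
        (fun z => fderiv_eq_zero_of_pd (fun i => hρ0 z i)) y x₀
    exact hAnc ⟨(2 / (n:ℝ)) * Lam x₀, fun x i j => by rw [hAρ x i j, hconst x]⟩
  -- c2 is constant
  have hc2const : ∀ (x : Fin n → ℝ), c2 x = c2 0 :=
    fun x => is_const_of_fderiv_eq_zero (hc2C.differentiable (by simp))
      (fun z => fderiv_eq_zero_of_pd (fun i => hv0 z i)) x 0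
  -- the gradient of c1 vanishes as well
  have hu0 : ∀ (x : Fin n → ℝ) k, pd k c1 x = 0 := by
    intro x k
    refine rank2 hn (hinv x) (c := pd k c1 x)
      (p := fun i => pd i lam x - c2 x * pd i Lam x) (q := fun j => g x j k) ?_
    intro i j
    show pd k c1 x * g x i j
      = (pd i lam x - c2 x * pd i Lam x) * g x j k
        + (pd j lam x - c2 x * pd j Lam x) * g x i k
    have h1 := hstar x i j k
    rw [hv0 x k] at h1
    linarith
  have hc1const : ∀ (x : Fin n → ℝ), c1 x = c1 0 :=
    fun x => is_const_of_fderiv_eq_zero (hc1C.differentiable (by simp))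
      (fun z => fderiv_eq_zero_of_pd (fun i => hu0 z i)) x 0
  exact ⟨⟨c1 0, hc1const⟩, ⟨c2 0, hc2const⟩⟩
end
end

section
/- Suppose two nonconstant smooth functions f, F on a connected pseudo-Riemannian manifold (M^n, g), n ≥ 2, satisfy f_{,ijk} = b(2f_{,k}g_{ij} + f_{,j}g_{ik} + f_{,i}g_{jk}) and F_{,ijk} = B(2F_{,k}g_{ij} + F_{,j}g_{ik} + F_{,i}g_{jk}) for constants b, B. Assume the differential of f is nonzero at some point, the differential of F is nonzero at some point, and the set where both df and dF are nonzero is nonempty. Then b = B. -/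
open scoped BigOperators
noncomputable section

section toolkit
variable {n : ℕ}

lemma contDiff_pd {h : (Fin n → ℝ) → ℝ} (hh : ContDiff ℝ (⊤ : ℕ∞) h) (i : Fin n) :
    ContDiff ℝ (⊤ : ℕ∞) (pd i h) := by
  have h1 : ContDiff ℝ (⊤ : ℕ∞) (fderiv ℝ h) := hh.fderiv_right (by simp)
  exact h1.clm_apply contDiff_const

lemma pd_sub {u v : (Fin n → ℝ) → ℝ} {x : Fin n → ℝ} (hu : DifferentiableAt ℝ u x)
    (hv : DifferentiableAt ℝ v x) (i : Fin n) :
    pd i (fun y => u y - v y) x = pd i u x - pd i v x := by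
  unfold pd
  rw [fderiv_fun_sub hu hv]; simp

lemma pd_mul {u v : (Fin n → ℝ) → ℝ} {x : Fin n → ℝ} (hu : DifferentiableAt ℝ u x)
    (hv : DifferentiableAt ℝ v x) (i : Fin n) :
    pd i (fun y => u y * v y) x = pd i u x * v x + u x * pd i v x := by
  unfold pd
  rw [fderiv_fun_mul hu hv]; simp; ring

lemma pd_sum {ι : Type*} (s : Finset ι) {h : ι → (Fin n → ℝ) → ℝ} {x : Fin n → ℝ}
    (hh : ∀ p ∈ s, DifferentiableAt ℝ (h p) x) (i : Fin n) :
    pd i (fun y => ∑ p ∈ s, h p y) x = ∑ p ∈ s, pd i (h p) x := by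
  unfold pd
  rw [fderiv_fun_sum hh]; simp

lemma pd_comm {h : (Fin n → ℝ) → ℝ} (hh : ContDiff ℝ (⊤ : ℕ∞) h) (i j : Fin n) (x : Fin n → ℝ) :
    pd i (fun y => pd j h y) x = pd j (fun y => pd i h y) x := by
  have hd : DifferentiableAt ℝ (fderiv ℝ h) x :=
    ((hh.fderiv_right (m := 1) (by rw [one_add_one_eq_two, ← WithTop.coe_ofNat]; exact WithTop.coe_le_coe.mpr le_top)).differentiable one_ne_zero) x
  have e : ∀ (a b : Fin n), pd a (fun y => pd b h y) x
      = fderiv ℝ (fderiv ℝ h) x (Pi.single a 1) (Pi.single b 1) := by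
    intro a b
    unfold pd
    rw [fderiv_clm_apply hd (differentiableAt_const _)]
    simp
  rw [e i j, e j i]
  exact (hh.contDiffAt.isSymmSndFDerivAt (by rw [minSmoothness_of_isRCLikeNormedField]; rw [← WithTop.coe_ofNat]; exact WithTop.coe_le_coe.mpr le_top)) _ _

end toolkit

section geom
variable {n : ℕ} (g ginv : (Fin n → ℝ) → Fin n → Fin n → ℝ)

/-- Curvature-type tensor built from Christoffel symbols. -/
def Riem (p i j k : Fin n) (x : Fin n → ℝ) : ℝ :=
  pd j (fun y => christoffel g ginv p i k y) x - pd k (fun y => christoffel g ginv p i j y) x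
    + ∑ q, (christoffel g ginv q i k x * christoffel g ginv p q j x
        - christoffel g ginv q i j x * christoffel g ginv p q k x)

variable (hgC : ∀ i j, ContDiff ℝ (⊤ : ℕ∞) (fun x => g x i j))
    (hginvC : ∀ i j, ContDiff ℝ (⊤ : ℕ∞) (fun x => ginv x i j))
    (hgsym : ∀ x i j, g x i j = g x j i)

include hgC hginvC in
lemma contDiff_christoffel (k i j : Fin n) :
    ContDiff ℝ (⊤ : ℕ∞) (fun x => christoffel g ginv k i j x) := by
  unfold christoffel
  apply ContDiff.mul contDiff_const
  apply ContDiff.sum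
  intro l _
  exact (hginvC k l).mul
    (((contDiff_pd (hgC l j) i).add (contDiff_pd (hgC l i) j)).sub (contDiff_pd (hgC i j) l))

include hgsym in
lemma christoffel_symm (k i j : Fin n) (x : Fin n → ℝ) :
    christoffel g ginv k i j x = christoffel g ginv k j i x := by
  unfold christoffel
  congr 1
  apply Finset.sum_congr rfl
  intro l _
  have h1 : (fun y => g y l j) = (fun y => g y j l) := by funext y; exact hgsym y l j
  have h2 : (fun y => g y l i) = (fun y => g y i l) := by funext y; exact hgsym y l i
  have h3 : (fun y => g y i j) = (fun y => g y j i) := by funext y; exact hgsym y i j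
  rw [h3]
  ring
end geom

section comm
variable {n : ℕ} (g ginv : (Fin n → ℝ) → Fin n → Fin n → ℝ)
variable (hgC : ∀ i j, ContDiff ℝ (⊤ : ℕ∞) (fun x => g x i j))
    (hginvC : ∀ i j, ContDiff ℝ (⊤ : ℕ∞) (fun x => ginv x i j))
    (hgsym : ∀ x i j, g x i j = g x j i)

include hgC hginvC hgsym in
lemma comm3 {f : (Fin n → ℝ) → ℝ} (hfC : ContDiff ℝ (⊤ : ℕ∞) f) (i j k : Fin n) (x : Fin n → ℝ) :
    thirdD g ginv f i j k x - thirdD g ginv f i k j x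
      = ∑ p, pd p f x * Riem g ginv p i j k x := by
  have hΓC : ∀ p a b, ContDiff ℝ (⊤ : ℕ∞) (fun y => christoffel g ginv p a b y) := fun p a b =>
    contDiff_christoffel g ginv hgC hginvC p a b
  have hfdC : ∀ p, ContDiff ℝ (⊤ : ℕ∞) (fun y => pd p f y) := fun p => contDiff_pd hfC p
  have hessdef : ∀ a b y, hess g ginv f a b y
      = pd b (fun z => pd a f z) y - ∑ q, christoffel g ginv q a b y * pd q f y :=
    fun a b y => rfl
  have tD : ∀ a b c, thirdD g ginv f a b c x
      = pd c (fun y => hess g ginv f a b y) x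
        - (∑ p, christoffel g ginv p a c x * hess g ginv f p b x)
        - ∑ p, christoffel g ginv p b c x * hess g ginv f a p x := fun a b c => rfl
  have pdhess : ∀ a b c, pd c (fun y => hess g ginv f a b y) x
      = pd c (fun y => pd b (fun z => pd a f z) y) x
        - ∑ q, (pd c (fun y => christoffel g ginv q a b y) x * pd q f x
              + christoffel g ginv q a b x * pd c (fun y => pd q f y) x) := by
    intro a b c
    have h1 : (fun y => hess g ginv f a b y)
        = fun y => pd b (fun z => pd a f z) y - ∑ q, christoffel g ginv q a b y * pd q f y := by
      funext y; exact hessdef a b y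
    rw [h1, pd_sub ((contDiff_pd (hfdC a) b).differentiable (by simp) x)
      (DifferentiableAt.fun_sum fun q _ =>
        (((hΓC q a b).differentiable (by simp) x).fun_mul ((hfdC q).differentiable (by simp) x)))]
    rw [pd_sum _ (fun q _ =>
        (((hΓC q a b).differentiable (by simp) x).fun_mul ((hfdC q).differentiable (by simp) x)))]
    congr 1
    apply Finset.sum_congr rfl
    intro q _
    exact pd_mul ((hΓC q a b).differentiable (by simp) x) ((hfdC q).differentiable (by simp) x) c
  have hQsym : (∑ p, christoffel g ginv p k j x * hess g ginv f i p x)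
      = ∑ p, christoffel g ginv p j k x * hess g ginv f i p x := by
    apply Finset.sum_congr rfl
    intro p _
    rw [christoffel_symm g ginv hgsym p k j x]
  have hQ1 : (∑ p, christoffel g ginv p i k x * hess g ginv f p j x)
      = ∑ p, (christoffel g ginv p i k x * pd j (fun z => pd p f z) x
          - christoffel g ginv p i k x * ∑ q, christoffel g ginv q p j x * pd q f x) := by
    apply Finset.sum_congr rfl
    intro p _
    rw [hessdef p j x]; ring
  have hQ3 : (∑ p, christoffel g ginv p i j x * hess g ginv f p k x)
      = ∑ p, (christoffel g ginv p i j x * pd k (fun z => pd p f z) x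
          - christoffel g ginv p i j x * ∑ q, christoffel g ginv q p k x * pd q f x) := by
    apply Finset.sum_congr rfl
    intro p _
    rw [hessdef p k x]; ring
  have swap : (∑ p, pd p f x * ∑ q, (christoffel g ginv q i k x * christoffel g ginv p q j x
        - christoffel g ginv q i j x * christoffel g ginv p q k x))
      = ∑ p, (christoffel g ginv p i k x * (∑ q, christoffel g ginv q p j x * pd q f x)
            - christoffel g ginv p i j x * (∑ q, christoffel g ginv q p k x * pd q f x)) := by
    have h1 : (∑ p, pd p f x * ∑ q, (christoffel g ginv q i k x * christoffel g ginv p q j x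
          - christoffel g ginv q i j x * christoffel g ginv p q k x))
        = ∑ p, ∑ q, pd p f x * (christoffel g ginv q i k x * christoffel g ginv p q j x
          - christoffel g ginv q i j x * christoffel g ginv p q k x) := by
      apply Finset.sum_congr rfl; intro p _; rw [Finset.mul_sum]
    rw [h1, Finset.sum_comm]
    apply Finset.sum_congr rfl
    intro p _
    rw [Finset.mul_sum, Finset.mul_sum, ← Finset.sum_sub_distrib]
    apply Finset.sum_congr rfl
    intro q _
    ring
  have rhs0 : (∑ p, pd p f x * Riem g ginv p i j k x)
      = (∑ p, (pd j (fun y => christoffel g ginv p i k y) x * pd p f x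
            - pd k (fun y => christoffel g ginv p i j y) x * pd p f x))
        + ∑ p, pd p f x * ∑ q, (christoffel g ginv q i k x * christoffel g ginv p q j x
            - christoffel g ginv q i j x * christoffel g ginv p q k x) := by
    rw [← Finset.sum_add_distrib]
    apply Finset.sum_congr rfl
    intro p _
    unfold Riem
    ring
  rw [tD i j k, tD i k j, pdhess i j k, pdhess i k j,
    pd_comm (hfdC i) j k x, hQsym, hQ1, hQ3, rhs0, swap]
  simp only [Finset.sum_add_distrib, Finset.sum_sub_distrib]
  ring
end comm

section low
variable {n : ℕ} (g ginv : (Fin n → ℝ) → Fin n → Fin n → ℝ)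

/-- Lowered Christoffel symbol `Γ_{aik}`. -/
def Gamlow (a i k : Fin n) (x : Fin n → ℝ) : ℝ :=
  (1/2) * (pd i (fun y => g y a k) x + pd k (fun y => g y a i) x - pd a (fun y => g y i k) x)

variable (hgC : ∀ i j, ContDiff ℝ (⊤ : ℕ∞) (fun x => g x i j))
    (hginvC : ∀ i j, ContDiff ℝ (⊤ : ℕ∞) (fun x => ginv x i j))
    (hgsym : ∀ x i j, g x i j = g x j i)
    (hinv : ∀ x i j, (∑ k, g x i k * ginv x k j) = if i = j then (1:ℝ) else 0)

lemma pd_add {u v : (Fin n → ℝ) → ℝ} {x : Fin n → ℝ} (hu : DifferentiableAt ℝ u x)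
    (hv : DifferentiableAt ℝ v x) (i : Fin n) :
    pd i (fun y => u y + v y) x = pd i u x + pd i v x := by
  unfold pd
  rw [fderiv_fun_add hu hv]; simp

include hgC in
lemma contDiff_Gamlow (a i k : Fin n) : ContDiff ℝ (⊤ : ℕ∞) (fun y => Gamlow g a i k y) := by
  unfold Gamlow
  exact contDiff_const.mul
    (((contDiff_pd (hgC a k) i).add (contDiff_pd (hgC a i) k)).sub (contDiff_pd (hgC i k) a))

include hinv in
lemma hinv' : ∀ (x : Fin n → ℝ) i j, (∑ k, ginv x i k * g x k j) = if i = j then (1:ℝ) else 0 := by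
  intro x i j
  have h : (Matrix.of (g x)) * (Matrix.of (ginv x)) = 1 := by
    ext a c
    rw [Matrix.mul_apply, Matrix.one_apply]
    exact hinv x a c
  have h2 : (Matrix.of (ginv x)) * (Matrix.of (g x)) = 1 := mul_eq_one_comm.mp h
  have := congrFun (congrFun h2 i) j
  rw [Matrix.mul_apply, Matrix.one_apply] at this
  exact this

include hgsym hinv in
lemma ginv_symm : ∀ (x : Fin n → ℝ) i j, ginv x i j = ginv x j i := by
  intro x i j
  have h : (Matrix.of (g x)) * (Matrix.of (ginv x)) = 1 := by
    ext a c
    rw [Matrix.mul_apply, Matrix.one_apply]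
    exact hinv x a c
  have h2 : (Matrix.of (ginv x)) * (Matrix.of (g x)) = 1 := mul_eq_one_comm.mp h
  have hAT : (Matrix.of (g x)).transpose = Matrix.of (g x) := by
    ext a c; exact hgsym x c a
  have hBT : (Matrix.of (ginv x)).transpose = Matrix.of (ginv x) := by
    have e1 : (Matrix.of (ginv x)).transpose * (Matrix.of (g x)) = 1 := by
      calc (Matrix.of (ginv x)).transpose * (Matrix.of (g x))
          = (Matrix.of (ginv x)).transpose * (Matrix.of (g x)).transpose := by rw [hAT]
        _ = ((Matrix.of (g x)) * (Matrix.of (ginv x))).transpose := by rw [Matrix.transpose_mul]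
        _ = 1 := by rw [h]; exact Matrix.transpose_one
    calc (Matrix.of (ginv x)).transpose
        = (Matrix.of (ginv x)).transpose * ((Matrix.of (g x)) * (Matrix.of (ginv x))) := by
          rw [h, Matrix.mul_one]
      _ = ((Matrix.of (ginv x)).transpose * (Matrix.of (g x))) * (Matrix.of (ginv x)) := by
          rw [Matrix.mul_assoc]
      _ = Matrix.of (ginv x) := by rw [e1, Matrix.one_mul]
  have := congrFun (congrFun hBT j) i
  simpa [Matrix.transpose_apply] using this

include hinv in
lemma lower_gam (p i k : Fin n) (x : Fin n → ℝ) :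
    (∑ m, g x p m * christoffel g ginv m i k x) = Gamlow g p i k x := by
  unfold christoffel
  have h1 : (∑ m, g x p m * ((1/2) * ∑ l, ginv x m l *
      (pd i (fun y => g y l k) x + pd k (fun y => g y l i) x - pd l (fun y => g y i k) x)))
      = ∑ m, ∑ l, (g x p m * ginv x m l) * ((1/2) *
      (pd i (fun y => g y l k) x + pd k (fun y => g y l i) x - pd l (fun y => g y i k) x)) := by
    apply Finset.sum_congr rfl
    intro m _
    rw [Finset.mul_sum, Finset.mul_sum]
    apply Finset.sum_congr rfl
    intro l _
    ring
  rw [h1, Finset.sum_comm]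
  have h2 : ∀ l : Fin n, (∑ m, (g x p m * ginv x m l) * ((1/2) *
      (pd i (fun y => g y l k) x + pd k (fun y => g y l i) x - pd l (fun y => g y i k) x)))
      = (if p = l then (1:ℝ) else 0) * ((1/2) *
      (pd i (fun y => g y l k) x + pd k (fun y => g y l i) x - pd l (fun y => g y i k) x)) := by
    intro l
    rw [← Finset.sum_mul, hinv x p l]
  rw [Finset.sum_congr rfl (fun l _ => h2 l)]
  simp [Gamlow]

lemma gam_eq (m i k : Fin n) (x : Fin n → ℝ) :
    christoffel g ginv m i k x = ∑ a, ginv x m a * Gamlow g a i k x := by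
  unfold christoffel Gamlow
  rw [Finset.mul_sum]
  apply Finset.sum_congr rfl
  intro a _
  ring

include hgsym in
lemma dg_eq (p m c : Fin n) (x : Fin n → ℝ) :
    pd c (fun y => g y p m) x = Gamlow g p m c x + Gamlow g m p c x := by
  unfold Gamlow
  rw [show (fun y => g y m p) = (fun y => g y p m) from funext fun y => hgsym y m p]
  ring

include hgsym hinv in
lemma pairc (a bb c d : Fin n) (x : Fin n → ℝ) :
    (∑ m, Gamlow g m a bb x * christoffel g ginv m c d x)
      = ∑ m, Gamlow g m c d x * christoffel g ginv m a bb x := by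
  have h1 : ∀ (u v u' v' : Fin n), (∑ m, Gamlow g m u v x * christoffel g ginv m u' v' x)
      = ∑ m, ∑ q, Gamlow g m u v x * (ginv x m q * Gamlow g q u' v' x) := by
    intro u v u' v'
    apply Finset.sum_congr rfl
    intro m _
    rw [gam_eq g ginv, Finset.mul_sum]
  rw [h1, h1, Finset.sum_comm]
  apply Finset.sum_congr rfl
  intro m _
  apply Finset.sum_congr rfl
  intro q _
  rw [ginv_symm g ginv hgsym hinv x q m]
  ring

end low

section anti
variable {n : ℕ} (g ginv : (Fin n → ℝ) → Fin n → Fin n → ℝ)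
variable (hgC : ∀ i j, ContDiff ℝ (⊤ : ℕ∞) (fun x => g x i j))
    (hginvC : ∀ i j, ContDiff ℝ (⊤ : ℕ∞) (fun x => ginv x i j))
    (hgsym : ∀ x i j, g x i j = g x j i)
    (hinv : ∀ x i j, (∑ k, g x i k * ginv x k j) = if i = j then (1:ℝ) else 0)

include hgC hginvC hgsym hinv in
lemma lowriem (p i j k : Fin n) (x : Fin n → ℝ) :
    (∑ m, g x p m * Riem g ginv m i j k x)
      = pd j (fun y => Gamlow g p i k y) x - pd k (fun y => Gamlow g p i j y) x
        - ∑ m, Gamlow g m p j x * christoffel g ginv m i k x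
        + ∑ m, Gamlow g m p k x * christoffel g ginv m i j x := by
  have key : ∀ (c d : Fin n), (∑ m, g x p m * pd c (fun y => christoffel g ginv m i d y) x)
      = pd c (fun y => Gamlow g p i d y) x
        - ∑ m, Gamlow g p m c x * christoffel g ginv m i d x
        - ∑ m, Gamlow g m p c x * christoffel g ginv m i d x := by
    intro c d
    have hprod : pd c (fun y => ∑ m, g y p m * christoffel g ginv m i d y) x
        = ∑ m, (pd c (fun y => g y p m) x * christoffel g ginv m i d x
              + g x p m * pd c (fun y => christoffel g ginv m i d y) x) := by
      rw [pd_sum _ (fun m _ => (((hgC p m).differentiable (by simp) x).fun_mul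
        (((contDiff_christoffel g ginv hgC hginvC m i d)).differentiable (by simp) x)))]
      apply Finset.sum_congr rfl
      intro m _
      exact pd_mul ((hgC p m).differentiable (by simp) x)
        ((contDiff_christoffel g ginv hgC hginvC m i d).differentiable (by simp) x) c
    have hfun : (fun y => ∑ m, g y p m * christoffel g ginv m i d y)
        = fun y => Gamlow g p i d y := funext fun y => lower_gam g ginv hinv p i d y
    rw [hfun] at hprod
    have hsplit : (∑ m, (pd c (fun y => g y p m) x * christoffel g ginv m i d x
            + g x p m * pd c (fun y => christoffel g ginv m i d y) x))
        = (∑ m, (Gamlow g p m c x * christoffel g ginv m i d x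
            + Gamlow g m p c x * christoffel g ginv m i d x))
          + ∑ m, g x p m * pd c (fun y => christoffel g ginv m i d y) x := by
      rw [← Finset.sum_add_distrib]
      apply Finset.sum_congr rfl
      intro m _
      rw [dg_eq g hgsym p m c x]; ring
    rw [hsplit, Finset.sum_add_distrib] at hprod
    linear_combination -hprod
  have keyq : (∑ m, g x p m * ∑ q, (christoffel g ginv q i k x * christoffel g ginv m q j x
        - christoffel g ginv q i j x * christoffel g ginv m q k x))
      = (∑ m, Gamlow g p m j x * christoffel g ginv m i k x)
        - ∑ m, Gamlow g p m k x * christoffel g ginv m i j x := by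
    have h1 : (∑ m, g x p m * ∑ q, (christoffel g ginv q i k x * christoffel g ginv m q j x
          - christoffel g ginv q i j x * christoffel g ginv m q k x))
        = ∑ m, ∑ q, g x p m * (christoffel g ginv q i k x * christoffel g ginv m q j x
          - christoffel g ginv q i j x * christoffel g ginv m q k x) := by
      apply Finset.sum_congr rfl; intro m _; rw [Finset.mul_sum]
    rw [h1, Finset.sum_comm]
    have h2 : ∀ q : Fin n, (∑ m, g x p m * (christoffel g ginv q i k x * christoffel g ginv m q j x
          - christoffel g ginv q i j x * christoffel g ginv m q k x))
        = christoffel g ginv q i k x * (∑ m, g x p m * christoffel g ginv m q j x)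
          - christoffel g ginv q i j x * (∑ m, g x p m * christoffel g ginv m q k x) := by
      intro q
      rw [Finset.mul_sum, Finset.mul_sum, ← Finset.sum_sub_distrib]
      apply Finset.sum_congr rfl; intro m _; ring
    rw [Finset.sum_congr rfl (fun q _ => h2 q)]
    rw [Finset.sum_congr rfl (fun q _ => by
      rw [lower_gam g ginv hinv p q j x, lower_gam g ginv hinv p q k x] :
        ∀ q ∈ Finset.univ, _ = christoffel g ginv q i k x * Gamlow g p q j x
          - christoffel g ginv q i j x * Gamlow g p q k x)]
    rw [← Finset.sum_sub_distrib]
    apply Finset.sum_congr rfl; intro q _; ring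
  have hsplitR : (∑ m, g x p m * Riem g ginv m i j k x)
      = (∑ m, g x p m * pd j (fun y => christoffel g ginv m i k y) x)
        - (∑ m, g x p m * pd k (fun y => christoffel g ginv m i j y) x)
        + ∑ m, g x p m * ∑ q, (christoffel g ginv q i k x * christoffel g ginv m q j x
            - christoffel g ginv q i j x * christoffel g ginv m q k x) := by
    rw [Finset.sum_congr rfl (fun m _ => by unfold Riem; ring :
      ∀ m ∈ Finset.univ, g x p m * Riem g ginv m i j k x
        = (g x p m * pd j (fun y => christoffel g ginv m i k y) x
          - g x p m * pd k (fun y => christoffel g ginv m i j y) x)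
          + g x p m * ∑ q, (christoffel g ginv q i k x * christoffel g ginv m q j x
            - christoffel g ginv q i j x * christoffel g ginv m q k x))]
    rw [Finset.sum_add_distrib, Finset.sum_sub_distrib]
  rw [hsplitR, key j k, key k j, keyq]
  ring

include hgC hginvC hgsym hinv in
lemma antisym (p i j k : Fin n) (x : Fin n → ℝ) :
    (∑ m, g x p m * Riem g ginv m i j k x) + (∑ m, g x i m * Riem g ginv m p j k x) = 0 := by
  rw [lowriem g ginv hgC hginvC hgsym hinv p i j k x,
    lowriem g ginv hgC hginvC hgsym hinv i p j k x]
  have hGlD : ∀ a b c : Fin n, DifferentiableAt ℝ (fun y => Gamlow g a b c y) x :=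
    fun a b c => (contDiff_Gamlow g hgC a b c).differentiable (by simp) x
  have h2 : ∀ (c d : Fin n), pd c (fun y => Gamlow g p i d y) x
      + pd c (fun y => Gamlow g i p d y) x
      = pd c (fun y => pd d (fun z => g z p i) y) x := by
    intro c d
    rw [← pd_add (hGlD p i d) (hGlD i p d) c]
    congr 1
    funext y
    exact (dg_eq g hgsym p i d y).symm
  have hcomm : pd j (fun y => pd k (fun z => g z p i) y) x
      = pd k (fun y => pd j (fun z => g z p i) y) x := pd_comm (hgC p i) j k x
  have hp1 : (∑ m, Gamlow g m i k x * christoffel g ginv m p j x)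
      = ∑ m, Gamlow g m p j x * christoffel g ginv m i k x :=
    pairc g ginv hgsym hinv i k p j x
  have hp2 : (∑ m, Gamlow g m p k x * christoffel g ginv m i j x)
      = ∑ m, Gamlow g m i j x * christoffel g ginv m p k x :=
    pairc g ginv hgsym hinv p k i j x
  linear_combination h2 j k - h2 k j + hcomm + hp1 + hp2
end anti

/-- Lemma 8 of the paper: two nonconstant functions `f`, `F` satisfying the
Obata-type equations `f_{,ijk} = b(2f_{,k}g_{ij} + f_{,j}g_{ik} + f_{,i}g_{jk})` and
`F_{,ijk} = B(2F_{,k}g_{ij} + F_{,j}g_{ik} + F_{,i}g_{jk})`, whose differentials are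
nonzero somewhere and are simultaneously nonzero at some point, force `b = B`.
(Coordinates on the connected manifold ℝⁿ.) -/
theorem stmt_14 {n : ℕ} (hn : 2 ≤ n)
    (g ginv : (Fin n → ℝ) → Fin n → Fin n → ℝ)
    (f F : (Fin n → ℝ) → ℝ) (b B : ℝ)
    (hgC : ∀ i j, ContDiff ℝ (⊤ : ℕ∞) (fun x => g x i j))
    (hginvC : ∀ i j, ContDiff ℝ (⊤ : ℕ∞) (fun x => ginv x i j))
    (hfC : ContDiff ℝ (⊤ : ℕ∞) f) (hFC : ContDiff ℝ (⊤ : ℕ∞) F)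
    (hgsym : ∀ x i j, g x i j = g x j i)
    (hinv : ∀ x i j, (∑ k, g x i k * ginv x k j) = if i = j then (1:ℝ) else 0)
    (hfnc : ∃ x y, f x ≠ f y) (hFnc : ∃ x y, F x ≠ F y)
    (hfd : ∃ x, ∃ i, pd i f x ≠ 0)
    (hFd : ∃ x, ∃ i, pd i F x ≠ 0)
    (hboth : ∃ x, (∃ i, pd i f x ≠ 0) ∧ (∃ i, pd i F x ≠ 0))
    (hf : ∀ x i j k, thirdD g ginv f i j k x
      = b * (2 * pd k f x * g x i j + pd j f x * g x i k + pd i f x * g x j k))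
    (hF : ∀ x i j k, thirdD g ginv F i j k x
      = B * (2 * pd k F x * g x i j + pd j F x * g x i k + pd i F x * g x j k)) :
    b = B := by
  obtain ⟨x0, ⟨i0, hu0⟩, ⟨j0, hv0⟩⟩ := hboth
  set u : Fin n → ℝ := fun p => pd p f x0 with hudef
  set v : Fin n → ℝ := fun p => pd p F x0 with hvdef
  -- curvature contractions from the Obata equations
  have hcf : ∀ i j k, (∑ p, u p * Riem g ginv p i j k x0)
      = b * (u k * g x0 i j - u j * g x0 i k) := by
    intro i j k
    have h1 := comm3 g ginv hgC hginvC hgsym hfC i j k x0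
    rw [hf x0 i j k, hf x0 i k j] at h1
    simp only [hudef]
    linear_combination -h1 + b * pd i f x0 * hgsym x0 j k
  have hcF : ∀ i j k, (∑ p, v p * Riem g ginv p i j k x0)
      = B * (v k * g x0 i j - v j * g x0 i k) := by
    intro i j k
    have h1 := comm3 g ginv hgC hginvC hgsym hFC i j k x0
    rw [hF x0 i j k, hF x0 i k j] at h1
    simp only [hvdef]
    linear_combination -h1 + B * pd i F x0 * hgsym x0 j k
  -- lowering lemma
  have hlow : ∀ (w : Fin n → ℝ) (j : Fin n),
      (∑ i, (∑ q, ginv x0 i q * w q) * g x0 i j) = w j := by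
    intro w j
    have h1 : ∀ i : Fin n, (∑ q, ginv x0 i q * w q) * g x0 i j
        = ∑ q, w q * (ginv x0 q i * g x0 i j) := by
      intro i
      rw [Finset.sum_mul]
      apply Finset.sum_congr rfl
      intro q _
      rw [ginv_symm g ginv hgsym hinv x0 i q]
      ring
    rw [Finset.sum_congr rfl fun i _ => h1 i, Finset.sum_comm]
    have h2 : ∀ q : Fin n, (∑ i, w q * (ginv x0 q i * g x0 i j))
        = w q * (if q = j then (1:ℝ) else 0) := by
      intro q
      rw [← Finset.mul_sum, hinv' g ginv hinv x0 q j]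
    rw [Finset.sum_congr rfl fun q _ => h2 q]
    simp
  have hexp : ∀ (w z : Fin n → ℝ) (c : ℝ) (jj kk : Fin n),
      (∑ i, (∑ q, ginv x0 i q * w q) * (c * (z kk * g x0 i jj - z jj * g x0 i kk)))
        = c * (z kk * w jj - z jj * w kk) := by
    intro w z c jj kk
    have e1 : ∀ i : Fin n, (∑ q, ginv x0 i q * w q) * (c * (z kk * g x0 i jj - z jj * g x0 i kk))
        = c * z kk * ((∑ q, ginv x0 i q * w q) * g x0 i jj)
          - c * z jj * ((∑ q, ginv x0 i q * w q) * g x0 i kk) := by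
      intro i; ring
    rw [Finset.sum_congr rfl fun i _ => e1 i, Finset.sum_sub_distrib,
      ← Finset.mul_sum, ← Finset.mul_sum, hlow w jj, hlow w kk]
    ring
  -- the central identity
  have central : ∀ jj kk : Fin n,
      b * (u kk * v jj - u jj * v kk) + B * (v kk * u jj - v jj * u kk) = 0 := by
    intro jj kk
    set S : Fin n → Fin n → ℝ := fun a i => ∑ m, g x0 a m * Riem g ginv m i jj kk x0 with hSdef
    have hS : ∀ a i, S a i = -S i a := by
      intro a i
      have := antisym g ginv hgC hginvC hgsym hinv a i jj kk x0
      simp only [hSdef]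
      linarith [this]
    have key1 : ∀ (w : Fin n → ℝ) (a : Fin n),
        (∑ i, (∑ q, ginv x0 i q * w q) * S i a) = ∑ m, w m * Riem g ginv m a jj kk x0 := by
      intro w a
      have e1 : ∀ i : Fin n, (∑ q, ginv x0 i q * w q) * S i a
          = ∑ m, ((∑ q, ginv x0 i q * w q) * g x0 i m) * Riem g ginv m a jj kk x0 := by
        intro i
        show (∑ q, ginv x0 i q * w q) * (∑ m, g x0 i m * Riem g ginv m a jj kk x0) = _
        rw [Finset.mul_sum]
        apply Finset.sum_congr rfl
        intro m _
        ring
      rw [Finset.sum_congr rfl fun i _ => e1 i, Finset.sum_comm]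
      apply Finset.sum_congr rfl
      intro m _
      rw [← Finset.sum_mul, hlow w m]
    have t1 : (∑ i, (∑ q, ginv x0 i q * v q) * (∑ a, (∑ q, ginv x0 a q * u q) * S a i))
        = b * (u kk * v jj - u jj * v kk) := by
      have e1 : ∀ i : Fin n, (∑ a, (∑ q, ginv x0 a q * u q) * S a i)
          = b * (u kk * g x0 i jj - u jj * g x0 i kk) := by
        intro i
        rw [key1 u i]
        exact hcf i jj kk
      rw [Finset.sum_congr rfl fun i _ => by rw [e1 i]]
      exact hexp v u b jj kk
    have t2 : (∑ i, (∑ q, ginv x0 i q * v q) * (∑ a, (∑ q, ginv x0 a q * u q) * S a i))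
        = -(B * (v kk * u jj - v jj * u kk)) := by
      have e0 : ∀ i : Fin n, (∑ q, ginv x0 i q * v q) * (∑ a, (∑ q, ginv x0 a q * u q) * S a i)
          = ∑ a, -((∑ q, ginv x0 a q * u q) * ((∑ q, ginv x0 i q * v q) * S i a)) := by
        intro i
        rw [Finset.mul_sum]
        apply Finset.sum_congr rfl
        intro a _
        rw [hS a i]
        ring
      rw [Finset.sum_congr rfl fun i _ => e0 i, Finset.sum_comm]
      have e2 : ∀ a : Fin n, (∑ i, -((∑ q, ginv x0 a q * u q) * ((∑ q, ginv x0 i q * v q) * S i a)))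
          = -((∑ q, ginv x0 a q * u q) * (B * (v kk * g x0 a jj - v jj * g x0 a kk))) := by
        intro a
        rw [Finset.sum_neg_distrib, ← Finset.mul_sum, key1 v a, hcF a jj kk]
      rw [Finset.sum_congr rfl fun a _ => e2 a, Finset.sum_neg_distrib, hexp u v B jj kk]
    linarith [t1, t2]
  -- conclude
  by_contra hne
  have hprop : ∀ jj kk : Fin n, u kk * v jj = u jj * v kk := by
    intro jj kk
    have h := central jj kk
    have h2 : (b - B) * (u kk * v jj - u jj * v kk) = 0 := by linarith
    have h3 : u kk * v jj - u jj * v kk = 0 := by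
      rcases mul_eq_zero.mp h2 with h4 | h4
      · exact absurd (by linarith) hne
      · exact h4
    linarith
  have hvio : v i0 ≠ 0 := by
    intro h0
    have := hprop j0 i0
    rw [h0] at this
    simp at this
    rcases this with h | h
    · exact hu0 h
    · exact hv0 h
  -- v is proportional to u : v_p * u_i0 = u_p * v_i0
  have hvk : ∀ jj kk : Fin n, v kk * g x0 jj jj = v kk * g x0 jj jj := fun _ _ => rfl
  have hkey : ∀ i j k : Fin n, v k * g x0 i j - v j * g x0 i k = 0 := by
    intro i j k
    have h1 := hcf i j k
    have h2 := hcF i j k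
    -- multiply h1 by v i0, use proportionality, compare with h2 * u i0
    have h3 : (∑ p, v p * Riem g ginv p i j k x0) * u i0
        = (∑ p, u p * Riem g ginv p i j k x0) * v i0 := by
      rw [Finset.sum_mul, Finset.sum_mul]
      apply Finset.sum_congr rfl
      intro p _
      linear_combination Riem g ginv p i j k x0 * hprop p i0
    rw [h1, h2] at h3
    have h4 : B * (v k * g x0 i j - v j * g x0 i k) * u i0
        = b * (v k * g x0 i j - v j * g x0 i k) * u i0 := by
      have e5 : u k * v i0 = u i0 * v k := hprop i0 k
      have e6 : u j * v i0 = u i0 * v j := hprop i0 j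
      linear_combination h3 + b * g x0 i j * e5 - b * g x0 i k * e6
    have h5 : (B - b) * ((v k * g x0 i j - v j * g x0 i k) * u i0) = 0 := by linarith
    rcases mul_eq_zero.mp h5 with h6 | h6
    · exact absurd (by linarith) hne
    · rcases mul_eq_zero.mp h6 with h7 | h7
      · exact h7
      · exact absurd h7 hu0
  -- contract hkey with ginv to get (n-1) v = 0
  have hzero : ∀ kk : Fin n, ((n : ℝ) - 1) * v kk = 0 := by
    intro kk
    have hL : (∑ i, ∑ j, ginv x0 i j * (v kk * g x0 i j - v j * g x0 i kk)) = 0 := by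
      apply Finset.sum_eq_zero
      intro i _
      apply Finset.sum_eq_zero
      intro j _
      rw [hkey i j kk]
      ring
    have hsplit : (∑ i, ∑ j, ginv x0 i j * (v kk * g x0 i j - v j * g x0 i kk))
        = (∑ i, ∑ j, ginv x0 i j * (v kk * g x0 i j))
          - ∑ i, ∑ j, ginv x0 i j * (v j * g x0 i kk) := by
      rw [← Finset.sum_sub_distrib]
      apply Finset.sum_congr rfl
      intro i _
      rw [← Finset.sum_sub_distrib]
      apply Finset.sum_congr rfl
      intro j _
      ring
    have hA : (∑ i, ∑ j, ginv x0 i j * (v kk * g x0 i j)) = (n : ℝ) * v kk := by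
      have e1 : ∀ i : Fin n, (∑ j, ginv x0 i j * (v kk * g x0 i j))
          = v kk * ∑ j, ginv x0 i j * g x0 j i := by
        intro i
        rw [Finset.mul_sum]
        apply Finset.sum_congr rfl
        intro j _
        rw [hgsym x0 j i]
        ring
      rw [Finset.sum_congr rfl fun i _ => e1 i]
      have e2 : ∀ i : Fin n, v kk * (∑ j, ginv x0 i j * g x0 j i) = v kk := by
        intro i
        rw [hinv' g ginv hinv x0 i i]
        simp
      rw [Finset.sum_congr rfl fun i _ => e2 i]
      simp [mul_comm]
    have hB : (∑ i, ∑ j, ginv x0 i j * (v j * g x0 i kk)) = v kk := by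
      rw [Finset.sum_comm]
      have e1 : ∀ j : Fin n, (∑ i, ginv x0 i j * (v j * g x0 i kk))
          = v j * ∑ i, ginv x0 j i * g x0 i kk := by
        intro j
        rw [Finset.mul_sum]
        apply Finset.sum_congr rfl
        intro i _
        rw [ginv_symm g ginv hgsym hinv x0 i j]
        ring
      rw [Finset.sum_congr rfl fun j _ => e1 j]
      have e2 : ∀ j : Fin n, v j * (∑ i, ginv x0 j i * g x0 i kk)
          = v j * (if j = kk then (1:ℝ) else 0) := by
        intro j
        rw [hinv' g ginv hinv x0 j kk]
      rw [Finset.sum_congr rfl fun j _ => e2 j]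
      simp
    rw [hsplit, hA, hB] at hL
    linarith
  have hn1 : ((n : ℝ) - 1) ≠ 0 := by
    have : (2 : ℝ) ≤ (n : ℝ) := by exact_mod_cast hn
    linarith
  have := hzero j0
  rcases mul_eq_zero.mp this with h | h
  · exact hn1 h
  · exact hv0 h
end
end

section
/- Let a_{ij} be a symmetric (0,2)-tensor on (M,g) satisfying the integrability condition a_{ip}R^p_{jkl} + a_{pj}R^p_{ikl} = λ_{l,i}g_{jk} + λ_{l,j}g_{ik} − λ_{k,i}g_{jl} − λ_{k,j}g_{il}, where λ_{i,j} is symmetric. Then a commutes with the Ricci tensor: a^p_i R_{pj} = a^p_j R_{ip}. -/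
open scoped BigOperators

/-- (Pointwise algebraic form.) If a symmetric form `a` satisfies the integrability
condition `a_{ip}R^p_{jkl} + a_{pj}R^p_{ikl} = λ_{l,i}g_{jk} + λ_{l,j}g_{ik}
− λ_{k,i}g_{jl} − λ_{k,j}g_{il}` with `λ_{i,j}` symmetric, where `R` has the
algebraic symmetries of a curvature tensor with respect to the nondegenerate
symmetric form `g`, then `a` commutes with the Ricci tensor:
`a^p_i R_{pj} = a^p_j R_{ip}`. -/
theorem stmt_18 {n : ℕ}
    (g a lam : Matrix (Fin n) (Fin n) ℝ)
    (R : Fin n → Fin n → Fin n → Fin n → ℝ)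
    (hgsym : ∀ i j, g i j = g j i)
    (hgnd : IsUnit g.det)
    (hasym : ∀ i j, a i j = a j i)
    (hlsym : ∀ i j, lam i j = lam j i)
    -- `Rl` is `R` with the first index lowered by `g`
    (Rl : Fin n → Fin n → Fin n → Fin n → ℝ)
    (hRl : ∀ i j k l, Rl i j k l = ∑ p, g i p * R p j k l)
    (hR1 : ∀ i j k l, Rl i j k l = - Rl j i k l)
    (hR2 : ∀ i j k l, Rl i j k l = - Rl i j l k)
    (hR3 : ∀ i j k l, Rl i j k l = Rl k l i j)
    (hBianchi : ∀ p i k l, R p i k l + R p k l i + R p l i k = 0)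
    (heq : ∀ i j k l, (∑ p, a i p * R p j k l) + (∑ p, a p j * R p i k l)
      = lam l i * g j k + lam l j * g i k - lam k i * g j l - lam k j * g i l) :
    ∀ i j, (∑ p, (∑ q, g⁻¹ p q * a q i) * (∑ m, R m p m j))
      = ∑ p, (∑ q, g⁻¹ p q * a q j) * (∑ m, R m i m p) := by
  -- the inverse metric is symmetric
  have hGsym : ∀ p q, g⁻¹ p q = g⁻¹ q p := by
    intro p q
    have hgt : g.transpose = g := by
      ext x y
      simpa using hgsym y x
    have h : (g⁻¹).transpose = g⁻¹ := by rw [Matrix.transpose_nonsing_inv, hgt]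
    simpa using (congrFun (congrFun h p) q).symm
  -- inverse identity entrywise
  have hginv : ∀ p t, (∑ q, g⁻¹ p q * g q t) = if p = t then 1 else 0 := by
    intro p t
    have h := Matrix.nonsing_inv_mul g hgnd
    have h2 := congrFun (congrFun h p) t
    simpa [Matrix.mul_apply, Matrix.one_apply] using h2
  -- express `R` by raising the first index of `Rl`
  have hRg : ∀ p j k l, R p j k l = ∑ q, g⁻¹ p q * Rl q j k l := by
    intro p j k l
    calc R p j k l = ∑ t, (if p = t then 1 else 0) * R t j k l := by
          simp [ite_mul]
      _ = ∑ t, (∑ q, g⁻¹ p q * g q t) * R t j k l := by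
          refine Finset.sum_congr rfl fun t _ => ?_
          rw [hginv]
      _ = ∑ t, ∑ q, g⁻¹ p q * (g q t * R t j k l) := by
          refine Finset.sum_congr rfl fun t _ => ?_
          rw [Finset.sum_mul]
          exact Finset.sum_congr rfl fun q _ => by ring
      _ = ∑ q, ∑ t, g⁻¹ p q * (g q t * R t j k l) := Finset.sum_comm
      _ = ∑ q, g⁻¹ p q * Rl q j k l := by
          refine Finset.sum_congr rfl fun q _ => ?_
          rw [hRl, Finset.mul_sum]
  -- Ricci in terms of Rl
  have hRic : ∀ p l, (∑ m, R m p m l) = ∑ m, ∑ q, g⁻¹ m q * Rl q p m l := by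
    intro p l
    exact Finset.sum_congr rfl fun m _ => hRg m p m l
  -- Ricci is symmetric
  have hRicSym : ∀ p l, (∑ m, R m p m l) = ∑ m, R m l m p := by
    intro p l
    rw [hRic p l, hRic l p, Finset.sum_comm]
    refine Finset.sum_congr rfl fun m _ => Finset.sum_congr rfl fun q _ => ?_
    rw [hGsym q m, hR3 m p q l]
  -- Bianchi contracted with a
  have hB : ∀ i j k l, (∑ p, a p j * R p i k l) + (∑ p, a p j * R p k l i)
      + (∑ p, a p j * R p l i k) = 0 := by
    intro i j k l
    rw [← Finset.sum_add_distrib, ← Finset.sum_add_distrib]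
    refine Finset.sum_eq_zero fun p _ => ?_
    linear_combination a p j * hBianchi p i k l
  -- the cycled identity
  have star : ∀ i j k l, (∑ p, a i p * R p j k l) + (∑ p, a k p * R p j l i)
      + (∑ p, a l p * R p j i k) = 0 := by
    intro i j k l
    have h1 := heq i j k l
    have h2 := heq k j l i
    have h3 := heq l j i k
    have hb := hB i j k l
    linear_combination h1 + h2 + h3 - hb + g j k * hlsym l i + lam l j * hgsym i k
      - g j l * hlsym k i - lam k j * hgsym i l + lam i j * hgsym k l - g j i * hlsym l k
  -- first contraction: g^{st} R^p_{s t l} = - g^{pq} Ric_{q l}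
  have hC : ∀ p l, (∑ s, ∑ t, g⁻¹ s t * R p s t l)
      = -(∑ q, g⁻¹ p q * (∑ m, R m q m l)) := by
    intro p l
    calc (∑ s, ∑ t, g⁻¹ s t * R p s t l)
        = ∑ s, ∑ t, ∑ q, g⁻¹ s t * (g⁻¹ p q * Rl q s t l) := by
          refine Finset.sum_congr rfl fun s _ => Finset.sum_congr rfl fun t _ => ?_
          rw [hRg, Finset.mul_sum]
      _ = ∑ s, ∑ q, ∑ t, g⁻¹ s t * (g⁻¹ p q * Rl q s t l) :=
          Finset.sum_congr rfl fun s _ => Finset.sum_comm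
      _ = ∑ q, ∑ s, ∑ t, g⁻¹ s t * (g⁻¹ p q * Rl q s t l) := Finset.sum_comm
      _ = ∑ q, ∑ t, ∑ s, g⁻¹ s t * (g⁻¹ p q * Rl q s t l) :=
          Finset.sum_congr rfl fun q _ => Finset.sum_comm
      _ = -(∑ q, g⁻¹ p q * (∑ m, R m q m l)) := by
          rw [← Finset.sum_neg_distrib]
          refine Finset.sum_congr rfl fun q _ => ?_
          rw [hRic, Finset.mul_sum, ← Finset.sum_neg_distrib]
          refine Finset.sum_congr rfl fun m _ => ?_
          rw [Finset.mul_sum, ← Finset.sum_neg_distrib]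
          refine Finset.sum_congr rfl fun u _ => ?_
          rw [hR1 q u m l, hGsym u m]
          ring
  -- second contraction: g^{st} R^p_{s l t} = g^{pq} Ric_{q l}
  have hD : ∀ p l, (∑ s, ∑ t, g⁻¹ s t * R p s l t)
      = ∑ q, g⁻¹ p q * (∑ m, R m q m l) := by
    intro p l
    calc (∑ s, ∑ t, g⁻¹ s t * R p s l t)
        = ∑ s, ∑ t, ∑ q, g⁻¹ s t * (g⁻¹ p q * Rl q s l t) := by
          refine Finset.sum_congr rfl fun s _ => Finset.sum_congr rfl fun t _ => ?_
          rw [hRg, Finset.mul_sum]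
      _ = ∑ s, ∑ q, ∑ t, g⁻¹ s t * (g⁻¹ p q * Rl q s l t) :=
          Finset.sum_congr rfl fun s _ => Finset.sum_comm
      _ = ∑ q, ∑ s, ∑ t, g⁻¹ s t * (g⁻¹ p q * Rl q s l t) := Finset.sum_comm
      _ = ∑ q, ∑ t, ∑ s, g⁻¹ s t * (g⁻¹ p q * Rl q s l t) :=
          Finset.sum_congr rfl fun q _ => Finset.sum_comm
      _ = ∑ q, g⁻¹ p q * (∑ m, R m q m l) := by
          refine Finset.sum_congr rfl fun q _ => ?_
          rw [hRic, Finset.mul_sum]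
          refine Finset.sum_congr rfl fun m _ => ?_
          rw [Finset.mul_sum]
          refine Finset.sum_congr rfl fun u _ => ?_
          have e1 : Rl q u l m = - Rl q u m l := by linarith [hR2 q u m l]
          have e2 : Rl q u m l = - Rl u q m l := hR1 q u m l
          rw [e1, e2, hGsym u m]
          ring
  -- the middle contraction vanishes by (anti)symmetry
  have hT2 : ∀ i l, (∑ s, ∑ t, g⁻¹ s t * (∑ p, a t p * R p s l i)) = 0 := by
    intro i l
    set S := (∑ s, ∑ t, g⁻¹ s t * (∑ p, a t p * R p s l i)) with hS
    have hform : S = ∑ s, ∑ q, (∑ t, ∑ p, g⁻¹ s t * (a t p * g⁻¹ p q)) * Rl q s l i := by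
      rw [hS]
      refine Finset.sum_congr rfl fun s _ => ?_
      calc (∑ t, g⁻¹ s t * (∑ p, a t p * R p s l i))
          = ∑ t, ∑ p, ∑ q, g⁻¹ s t * (a t p * g⁻¹ p q) * Rl q s l i := by
            refine Finset.sum_congr rfl fun t _ => ?_
            rw [Finset.mul_sum]
            refine Finset.sum_congr rfl fun p _ => ?_
            rw [hRg, Finset.mul_sum, Finset.mul_sum]
            exact Finset.sum_congr rfl fun q _ => by ring
        _ = ∑ t, ∑ q, ∑ p, g⁻¹ s t * (a t p * g⁻¹ p q) * Rl q s l i :=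
            Finset.sum_congr rfl fun t _ => Finset.sum_comm
        _ = ∑ q, ∑ t, ∑ p, g⁻¹ s t * (a t p * g⁻¹ p q) * Rl q s l i := Finset.sum_comm
        _ = ∑ q, (∑ t, ∑ p, g⁻¹ s t * (a t p * g⁻¹ p q)) * Rl q s l i := by
            refine Finset.sum_congr rfl fun q _ => ?_
            rw [Finset.sum_mul]
            exact Finset.sum_congr rfl fun t _ => by rw [Finset.sum_mul]
    have hBsym : ∀ s q, (∑ t, ∑ p, g⁻¹ q t * (a t p * g⁻¹ p s))
        = ∑ t, ∑ p, g⁻¹ s t * (a t p * g⁻¹ p q) := by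
      intro s q
      rw [Finset.sum_comm]
      refine Finset.sum_congr rfl fun t _ => Finset.sum_congr rfl fun p _ => ?_
      rw [hGsym q p, hasym p t, hGsym t s]
      ring
    have hneg : S = -S := by
      calc S = ∑ s, ∑ q, (∑ t, ∑ p, g⁻¹ s t * (a t p * g⁻¹ p q)) * Rl q s l i := hform
        _ = ∑ q, ∑ s, (∑ t, ∑ p, g⁻¹ s t * (a t p * g⁻¹ p q)) * Rl q s l i :=
            Finset.sum_comm
        _ = ∑ s, ∑ q, -((∑ t, ∑ p, g⁻¹ s t * (a t p * g⁻¹ p q)) * Rl q s l i) := by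
            refine Finset.sum_congr rfl fun s _ => Finset.sum_congr rfl fun q _ => ?_
            rw [hBsym s q, hR1 q s l i]
            ring
        _ = -S := by
            rw [hform]
            rw [← Finset.sum_neg_distrib]
            exact Finset.sum_congr rfl fun s _ => by rw [← Finset.sum_neg_distrib]
    linarith [hneg]
  -- pulling the a-factor out of the contractions
  have hT13 : ∀ (b : Fin n → ℝ) (F : Fin n → Fin n → Fin n → ℝ),
      (∑ s, ∑ t, g⁻¹ s t * (∑ p, b p * F p s t))
        = ∑ p, b p * (∑ s, ∑ t, g⁻¹ s t * F p s t) := by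
    intro b F
    calc (∑ s, ∑ t, g⁻¹ s t * (∑ p, b p * F p s t))
        = ∑ s, ∑ t, ∑ p, b p * (g⁻¹ s t * F p s t) := by
          refine Finset.sum_congr rfl fun s _ => Finset.sum_congr rfl fun t _ => ?_
          rw [Finset.mul_sum]
          exact Finset.sum_congr rfl fun p _ => by ring
      _ = ∑ s, ∑ p, ∑ t, b p * (g⁻¹ s t * F p s t) :=
          Finset.sum_congr rfl fun s _ => Finset.sum_comm
      _ = ∑ p, ∑ s, ∑ t, b p * (g⁻¹ s t * F p s t) := Finset.sum_comm
      _ = ∑ p, b p * (∑ s, ∑ t, g⁻¹ s t * F p s t) := by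
          refine Finset.sum_congr rfl fun p _ => ?_
          rw [Finset.mul_sum]
          exact Finset.sum_congr rfl fun s _ => by rw [Finset.mul_sum]
  intro i j
  -- contract the cycled identity with g⁻¹
  have hkey : (∑ s, ∑ t, g⁻¹ s t * (∑ p, a i p * R p s t j))
      + (∑ s, ∑ t, g⁻¹ s t * (∑ p, a t p * R p s j i))
      + (∑ s, ∑ t, g⁻¹ s t * (∑ p, a j p * R p s i t)) = 0 := by
    rw [← Finset.sum_add_distrib, ← Finset.sum_add_distrib]
    refine Finset.sum_eq_zero fun s _ => ?_
    rw [← Finset.sum_add_distrib, ← Finset.sum_add_distrib]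
    refine Finset.sum_eq_zero fun t _ => ?_
    have h := star i s t j
    linear_combination g⁻¹ s t * h
  have e1 : (∑ s, ∑ t, g⁻¹ s t * (∑ p, a i p * R p s t j))
      = -(∑ p, a i p * (∑ q, g⁻¹ p q * (∑ m, R m q m j))) := by
    have h := hT13 (fun p => a i p) (fun p s t => R p s t j)
    rw [h, ← Finset.sum_neg_distrib]
    refine Finset.sum_congr rfl fun p _ => ?_
    rw [hC p j]
    ring
  have e3 : (∑ s, ∑ t, g⁻¹ s t * (∑ p, a j p * R p s i t))
      = ∑ p, a j p * (∑ q, g⁻¹ p q * (∑ m, R m q m i)) := by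
    have h := hT13 (fun p => a j p) (fun p s t => R p s i t)
    rw [h]
    exact Finset.sum_congr rfl fun p _ => by rw [hD p i]
  have e2 := hT2 i j
  -- rewrite the goal into the contracted form
  have hL : (∑ p, (∑ q, g⁻¹ p q * a q i) * (∑ m, R m p m j))
      = ∑ p, a i p * (∑ q, g⁻¹ p q * (∑ m, R m q m j)) := by
    calc (∑ p, (∑ q, g⁻¹ p q * a q i) * (∑ m, R m p m j))
        = ∑ p, ∑ q, g⁻¹ p q * a q i * (∑ m, R m p m j) := by
          refine Finset.sum_congr rfl fun p _ => ?_
          rw [Finset.sum_mul]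
      _ = ∑ q, ∑ p, g⁻¹ p q * a q i * (∑ m, R m p m j) := Finset.sum_comm
      _ = ∑ p, a i p * (∑ q, g⁻¹ p q * (∑ m, R m q m j)) := by
          refine Finset.sum_congr rfl fun p _ => ?_
          rw [Finset.mul_sum]
          refine Finset.sum_congr rfl fun q _ => ?_
          rw [hGsym q p, hasym p i]
          ring
  have hRgoal : (∑ p, (∑ q, g⁻¹ p q * a q j) * (∑ m, R m i m p))
      = ∑ p, a j p * (∑ q, g⁻¹ p q * (∑ m, R m q m i)) := by
    calc (∑ p, (∑ q, g⁻¹ p q * a q j) * (∑ m, R m i m p))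
        = ∑ p, (∑ q, g⁻¹ p q * a q j) * (∑ m, R m p m i) := by
          refine Finset.sum_congr rfl fun p _ => ?_
          rw [hRicSym i p]
      _ = ∑ p, ∑ q, g⁻¹ p q * a q j * (∑ m, R m p m i) := by
          refine Finset.sum_congr rfl fun p _ => ?_
          rw [Finset.sum_mul]
      _ = ∑ q, ∑ p, g⁻¹ p q * a q j * (∑ m, R m p m i) := Finset.sum_comm
      _ = ∑ p, a j p * (∑ q, g⁻¹ p q * (∑ m, R m q m i)) := by
          refine Finset.sum_congr rfl fun p _ => ?_
          rw [Finset.mul_sum]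
          refine Finset.sum_congr rfl fun q _ => ?_
          rw [hGsym q p, hasym p j]
          ring
  rw [hL, hRgoal]
  linarith [hkey, e1, e2, e3]
end
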